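/- arXiv:2507.03676 — 5 statements merged into one kernel-verified Lean document; each statement's English description precedes it below -/
import Mathlib

section
/- Let Δ be a positive integer and γ ∈ (0, 1/(2Δ)). Let G be an n-vertex graph with minimum degree δ(G) ≥ ((2Δ−1)/(2Δ) + γ)·n and let H be an n-vertex graph with maximum degree Δ(H) ≤ Δ. Suppose S ⊆ V(H) has size |S| ≤ γΔn and φ_S : S → V(G) is an injective map embedding H[S] into G (i.e., for every edge xy of H with x,y ∈ S, φ_S(x)φ_S(y) is an edge of G). Then there exists an injective map φ : V(H) → V(G) embedding H into G that extends φ_S. -/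
/-- Extension version of the Sauer–Spencer theorem. -/
theorem stmt0 {Δ n : ℕ} (hΔ : 0 < Δ) {γ : ℝ} (hγ0 : 0 < γ) (hγ1 : γ < 1 / (2 * Δ))
    {V W : Type*} [Fintype V] [Fintype W] [DecidableEq V] [DecidableEq W]
    (H : SimpleGraph V) (G : SimpleGraph W)
    [DecidableRel H.Adj] [DecidableRel G.Adj]
    (hV : Fintype.card V = n) (hW : Fintype.card W = n)
    (hG : ∀ v : W, ((2 * (Δ : ℝ) - 1) / (2 * Δ) + γ) * n ≤ G.degree v)
    (hH : ∀ x : V, H.degree x ≤ Δ)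
    (S : Finset V) (hS : (S.card : ℝ) ≤ γ * Δ * n)
    (φS : V → W) (hinj : Set.InjOn φS S)
    (hemb : ∀ x ∈ S, ∀ y ∈ S, H.Adj x y → G.Adj (φS x) (φS y)) :
    ∃ φ : V → W, Function.Injective φ ∧
      (∀ x y, H.Adj x y → G.Adj (φ x) (φ y)) ∧
      (∀ x ∈ S, φ x = φS x) := by
  classical
  have hΔR : (0:ℝ) < (Δ:ℝ) := by exact_mod_cast hΔ
  -- trivial case n = 0
  rcases Nat.eq_zero_or_pos n with hn0 | hnpos
  · have hVempty : IsEmpty V := by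
      rw [← Fintype.card_eq_zero_iff, hV, hn0]
    exact ⟨φS, fun a b _ => Subsingleton.elim a b,
      fun a b h => (hVempty.false a).elim, fun x _ => rfl⟩
  have hnR : (0:ℝ) < (n:ℝ) := by exact_mod_cast hnpos
  -- construct an initial injective extension of φS
  have hScard : (S.image φS).card = S.card := Finset.card_image_of_injOn hinj
  have hcompl : Fintype.card {x // x ∈ (Sᶜ : Finset V)}
      = Fintype.card {w // w ∈ ((S.image φS)ᶜ : Finset W)} := by
    simp only [Fintype.card_coe, Finset.card_compl, hScard, hV, hW]
  let e := Fintype.equivOfCardEq hcompl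
  let f0 : V → W := fun x =>
    if h : x ∈ S then φS x else (e ⟨x, Finset.mem_compl.mpr h⟩ : W)
  have hf0ext : ∀ x ∈ S, f0 x = φS x := fun x hx => dif_pos hx
  have hf0inj : Function.Injective f0 := by
    intro a b hab
    simp only [f0] at hab
    by_cases ha : a ∈ S <;> by_cases hb : b ∈ S
    · exact hinj ha hb (by rwa [dif_pos ha, dif_pos hb] at hab)
    · exfalso
      rw [dif_pos ha, dif_neg hb] at hab
      have h1 : φS a ∈ S.image φS := Finset.mem_image_of_mem φS ha
      have h2 := (e ⟨b, Finset.mem_compl.mpr hb⟩).2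
      rw [← hab] at h2
      exact Finset.mem_compl.mp h2 h1
    · exfalso
      rw [dif_neg ha, dif_pos hb] at hab
      have h1 : φS b ∈ S.image φS := Finset.mem_image_of_mem φS hb
      have h2 := (e ⟨a, Finset.mem_compl.mpr ha⟩).2
      rw [hab] at h2
      exact Finset.mem_compl.mp h2 h1
    · rw [dif_neg ha, dif_neg hb] at hab
      have := e.injective (Subtype.ext hab)
      exact Subtype.mk_eq_mk.mp this
  -- the set of bad (non-embedded) ordered pairs
  let bad : (V → W) → Finset (V × V) := fun f =>
    Finset.univ.filter (fun p => H.Adj p.1 p.2 ∧ ¬ G.Adj (f p.1) (f p.2))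
  -- counting helper: number of non-neighbors of w (including w) is small
  have hd : ∀ w : W, ((Finset.univ.filter (fun u : W => ¬ G.Adj u w)).card : ℝ)
      ≤ (1/(2*(Δ:ℝ)) - γ) * n := by
    intro w
    have hnb : Finset.univ.filter (fun u : W => G.Adj u w) = G.neighborFinset w := by
      ext u
      simp [SimpleGraph.mem_neighborFinset, G.adj_comm]
    have h1 : (Finset.univ.filter (fun u : W => ¬ G.Adj u w)).card
        = Fintype.card W - G.degree w := by
      rw [Finset.filter_not, Finset.card_sdiff_of_subset (Finset.filter_subset _ _), hnb,
        Finset.card_univ, SimpleGraph.degree]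
    have hle : G.degree w ≤ Fintype.card W := by
      rw [SimpleGraph.degree, ← Finset.card_univ]
      exact Finset.card_le_univ _
    have h2 : ((Finset.univ.filter (fun u : W => ¬ G.Adj u w)).card : ℝ)
        = (n:ℝ) - G.degree w := by
      rw [h1, Nat.cast_sub hle, hW]
    rw [h2]
    have h3 := hG w
    have hfe : (2*(Δ:ℝ) - 1)/(2*(Δ:ℝ)) = 1 - 1/(2*(Δ:ℝ)) := by
      field_simp
    rw [hfe] at h3
    nlinarith [hnR]
  -- key improvement step
  have improve : ∀ f : V → W, Function.Injective f → (∀ s ∈ S, f s = φS s) →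
      ∀ x y : V, H.Adj x y → ¬ G.Adj (f x) (f y) → y ∉ S →
      ∃ g : V → W, Function.Injective g ∧ (∀ s ∈ S, g s = φS s) ∧ bad g ⊂ bad f := by
    intro f hfinj hfext x y hxy hnadj hyS
    have hfbij : Function.Bijective f :=
      (Fintype.bijective_iff_injective_and_card f).mpr ⟨hfinj, by rw [hV, hW]⟩
    have hcard_pre : ∀ w : W, (Finset.univ.filter (fun z : V => ¬ G.Adj (f z) w)).card
        = (Finset.univ.filter (fun u : W => ¬ G.Adj u w)).card := by
      intro w
      apply Finset.card_bij (fun z _ => f z)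
      · intro z hz
        simp only [Finset.mem_filter, Finset.mem_univ, true_and] at hz ⊢
        exact hz
      · intro a _ b _ h
        exact hfinj h
      · intro u hu
        simp only [Finset.mem_filter, Finset.mem_univ, true_and] at hu
        obtain ⟨z, hz⟩ := hfbij.2 u
        exact ⟨z, by simp only [Finset.mem_filter, Finset.mem_univ, true_and, hz]; exact hu, hz⟩
    let A : Finset V := Finset.univ.filter
      (fun z => ∀ u ∈ H.neighborFinset y, G.Adj (f z) (f u))
    let B : Finset V := Finset.univ.filter
      (fun z => ∀ u ∈ H.neighborFinset z, G.Adj (f y) (f u))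
    have hAc : ((Aᶜ).card : ℝ) ≤ (Δ:ℝ) * ((1/(2*(Δ:ℝ)) - γ) * n) := by
      have hsub : Aᶜ ⊆ (H.neighborFinset y).biUnion
          (fun u => Finset.univ.filter (fun z => ¬ G.Adj (f z) (f u))) := by
        intro z hz
        simp only [A, Finset.mem_compl, Finset.mem_filter, Finset.mem_univ, true_and,
          not_forall] at hz
        obtain ⟨u, hu, hn⟩ := hz
        exact Finset.mem_biUnion.mpr ⟨u, hu,
          by simp only [Finset.mem_filter, Finset.mem_univ, true_and]; exact hn⟩
      have hγpos : (0:ℝ) ≤ 1/(2*(Δ:ℝ)) - γ := by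
        have : γ < 1/(2*(Δ:ℝ)) := by exact_mod_cast hγ1
        linarith
      calc ((Aᶜ).card : ℝ)
          ≤ (((H.neighborFinset y).biUnion
            (fun u => Finset.univ.filter (fun z => ¬ G.Adj (f z) (f u)))).card : ℝ) := by
            exact_mod_cast Finset.card_le_card hsub
        _ ≤ ∑ u ∈ H.neighborFinset y,
            ((Finset.univ.filter (fun z => ¬ G.Adj (f z) (f u))).card : ℝ) := by
            exact_mod_cast Finset.card_biUnion_le
        _ ≤ ∑ _u ∈ H.neighborFinset y, (1/(2*(Δ:ℝ)) - γ) * n :=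
            Finset.sum_le_sum (fun u _ => by rw [hcard_pre]; exact hd (f u))
        _ = (H.degree y : ℝ) * ((1/(2*(Δ:ℝ)) - γ) * n) := by
            rw [Finset.sum_const, nsmul_eq_mul, SimpleGraph.degree]
        _ ≤ (Δ:ℝ) * ((1/(2*(Δ:ℝ)) - γ) * n) := by
            have h1 : (H.degree y : ℝ) ≤ (Δ:ℝ) := by exact_mod_cast hH y
            have h2 : (0:ℝ) ≤ (1/(2*(Δ:ℝ)) - γ) * n := mul_nonneg hγpos hnR.le
            nlinarith
    have hBc : ((Bᶜ).card : ℝ) ≤ (Δ:ℝ) * ((1/(2*(Δ:ℝ)) - γ) * n) := by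
      have hsub : Bᶜ ⊆ (Finset.univ.filter (fun u : V => ¬ G.Adj (f y) (f u))).biUnion
          (fun u => H.neighborFinset u) := by
        intro z hz
        simp only [B, Finset.mem_compl, Finset.mem_filter, Finset.mem_univ, true_and,
          not_forall] at hz
        obtain ⟨u, hu, hn⟩ := hz
        refine Finset.mem_biUnion.mpr ⟨u,
          by simp only [Finset.mem_filter, Finset.mem_univ, true_and]; exact hn, ?_⟩
        rw [SimpleGraph.mem_neighborFinset] at hu ⊢
        exact hu.symm
      have hCcard : ((Finset.univ.filter (fun u : V => ¬ G.Adj (f y) (f u))).card : ℝ)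
          ≤ (1/(2*(Δ:ℝ)) - γ) * n := by
        have heq : Finset.univ.filter (fun u : V => ¬ G.Adj (f y) (f u))
            = Finset.univ.filter (fun u : V => ¬ G.Adj (f u) (f y)) := by
          ext u
          simp [G.adj_comm]
        rw [heq, hcard_pre (f y)]
        exact hd (f y)
      calc ((Bᶜ).card : ℝ)
          ≤ (((Finset.univ.filter (fun u : V => ¬ G.Adj (f y) (f u))).biUnion
            (fun u => H.neighborFinset u)).card : ℝ) := by
            exact_mod_cast Finset.card_le_card hsub
        _ ≤ ∑ u ∈ Finset.univ.filter (fun u : V => ¬ G.Adj (f y) (f u)),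
            ((H.neighborFinset u).card : ℝ) := by exact_mod_cast Finset.card_biUnion_le
        _ ≤ ∑ _u ∈ Finset.univ.filter (fun u : V => ¬ G.Adj (f y) (f u)), (Δ:ℝ) :=
            Finset.sum_le_sum (fun u _ => by exact_mod_cast hH u)
        _ = ((Finset.univ.filter (fun u : V => ¬ G.Adj (f y) (f u))).card : ℝ) * (Δ:ℝ) := by
            rw [Finset.sum_const, nsmul_eq_mul]
        _ ≤ (Δ:ℝ) * ((1/(2*(Δ:ℝ)) - γ) * n) := by
            nlinarith [hCcard]
    -- the target set is nonempty
    let T := (A ∩ B) \ S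
    have hTpos : 0 < T.card := by
      have hcover : (Finset.univ : Finset V) ⊆ T ∪ Aᶜ ∪ Bᶜ ∪ S := by
        intro z _
        by_cases hzA : z ∈ A
        · by_cases hzB : z ∈ B
          · by_cases hzS : z ∈ S
            · simp [hzS]
            · simp [T, hzA, hzB, hzS]
          · simp [Finset.mem_compl, hzB]
        · simp [Finset.mem_compl, hzA]
      have hcount : n ≤ T.card + (Aᶜ).card + (Bᶜ).card + S.card := by
        calc n = Fintype.card V := hV.symm
          _ = (Finset.univ : Finset V).card := (Finset.card_univ).symm
          _ ≤ (T ∪ Aᶜ ∪ Bᶜ ∪ S).card := Finset.card_le_card hcover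
          _ ≤ (T ∪ Aᶜ ∪ Bᶜ).card + S.card := Finset.card_union_le _ _
          _ ≤ (T ∪ Aᶜ).card + (Bᶜ).card + S.card := by
              have := Finset.card_union_le (T ∪ Aᶜ) (Bᶜ)
              omega
          _ ≤ T.card + (Aᶜ).card + (Bᶜ).card + S.card := by
              have := Finset.card_union_le T (Aᶜ)
              omega
      have hcountR : (n:ℝ) ≤ (T.card : ℝ) + (Aᶜ).card + (Bᶜ).card + S.card := by
        exact_mod_cast hcount
      have hhalf : (Δ:ℝ) * ((1/(2*(Δ:ℝ)) - γ) * n) = (n:ℝ)/2 - (Δ:ℝ)*γ*(n:ℝ) := by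
        field_simp
      have hTR : (0:ℝ) < (T.card : ℝ) := by
        have hγΔn : (0:ℝ) < γ * (Δ:ℝ) * n := by positivity
        nlinarith [hAc, hBc, hS]
      exact_mod_cast hTR
    obtain ⟨z, hzT⟩ := Finset.card_pos.mp hTpos
    have hzS : z ∉ S := (Finset.mem_sdiff.mp hzT).2
    have hzAB := (Finset.mem_sdiff.mp hzT).1
    have hA : ∀ u ∈ H.neighborFinset y, G.Adj (f z) (f u) := by
      have := (Finset.mem_inter.mp hzAB).1
      simpa [A] using this
    have hB : ∀ u ∈ H.neighborFinset z, G.Adj (f y) (f u) := by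
      have := (Finset.mem_inter.mp hzAB).2
      simpa [B] using this
    have hxNy : x ∈ H.neighborFinset y := by
      rw [SimpleGraph.mem_neighborFinset]
      exact hxy.symm
    have hzy : z ≠ y := by
      intro h
      exact hnadj ((hB x (h ▸ hxNy)).symm)
    have hzx : z ≠ x := by
      intro h
      exact G.irrefl (h ▸ hA x hxNy)
    have hzNy : z ∉ H.neighborFinset y := by
      intro h
      rw [SimpleGraph.mem_neighborFinset] at h
      have : y ∈ H.neighborFinset z := by
        rw [SimpleGraph.mem_neighborFinset]; exact h.symm
      exact G.irrefl (hB y this)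
    set σ := Equiv.swap y z with hσ
    have hσy : σ y = z := Equiv.swap_apply_left y z
    have hσz : σ z = y := Equiv.swap_apply_right y z
    have hσfix : ∀ a : V, a ≠ y → a ≠ z → σ a = a :=
      fun a h1 h2 => Equiv.swap_apply_of_ne_of_ne h1 h2
    refine ⟨f ∘ σ, hfinj.comp σ.injective, ?_, ?_⟩
    · intro s hs
      have h1 : s ≠ y := fun h => hyS (h ▸ hs)
      have h2 : s ≠ z := fun h => hzS (h ▸ hs)
      simp only [Function.comp_apply, hσfix s h1 h2]
      exact hfext s hs
    · -- key: every pair touching y or z is good under f ∘ σ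
      have hkey : ∀ a b : V, H.Adj a b → ¬ G.Adj (f (σ a)) (f (σ b)) → a ≠ y ∧ a ≠ z := by
        intro a b hadj hbad
        constructor
        · intro hay
          subst hay
          have hby : b ≠ a := fun h => H.irrefl (h ▸ hadj)
          have hbz : b ≠ z := by
            intro h
            subst h
            exact hzNy ((SimpleGraph.mem_neighborFinset _ _ _).mpr hadj)
          have hbN : b ∈ H.neighborFinset a := (SimpleGraph.mem_neighborFinset _ _ _).mpr hadj
          apply hbad
          rw [hσy, hσfix b hby hbz]
          exact hA b hbN
        · intro haz
          subst haz
          have hby : b ≠ y := by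
            intro h
            subst h
            exact hzNy ((SimpleGraph.mem_neighborFinset _ _ _).mpr hadj.symm)
          have hbz : b ≠ a := fun h => H.irrefl (h ▸ hadj)
          have hbN : b ∈ H.neighborFinset a := (SimpleGraph.mem_neighborFinset _ _ _).mpr hadj
          apply hbad
          rw [hσz, hσfix b hby hbz]
          exact hB b hbN
      have hsub : bad (f ∘ σ) ⊆ bad f := by
        intro p hp
        simp only [bad, Finset.mem_filter, Finset.mem_univ, true_and,
          Function.comp_apply] at hp ⊢
        obtain ⟨hadj, hbad⟩ := hp
        obtain ⟨h1, h2⟩ := hkey p.1 p.2 hadj hbad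
        obtain ⟨h3, h4⟩ := hkey p.2 p.1 hadj.symm (fun h => hbad h.symm)
        rw [hσfix p.1 h1 h2, hσfix p.2 h3 h4] at hbad
        exact ⟨hadj, hbad⟩
      refine (Finset.ssubset_iff_of_subset hsub).mpr ⟨(x, y), ?_, ?_⟩
      · simp only [bad, Finset.mem_filter, Finset.mem_univ, true_and]
        exact ⟨hxy, hnadj⟩
      · simp only [bad, Finset.mem_filter, Finset.mem_univ, true_and,
          Function.comp_apply, not_and, not_not]
        intro _
        have hxy' : x ≠ y := fun h => H.irrefl (h ▸ hxy)
        rw [hσy, hσfix x hxy' (Ne.symm hzx)]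
        exact (hA x hxNy).symm
  -- induction on the number of bad pairs
  have main : ∀ k : ℕ, ∀ f : V → W, Function.Injective f → (∀ s ∈ S, f s = φS s) →
      (bad f).card ≤ k →
      ∃ φ : V → W, Function.Injective φ ∧ (∀ a b, H.Adj a b → G.Adj (φ a) (φ b)) ∧
        (∀ s ∈ S, φ s = φS s) := by
    intro k
    induction k with
    | zero =>
      intro f h1 h2 h3
      refine ⟨f, h1, ?_, h2⟩
      intro a b hab
      by_contra hn
      have hmem : (a, b) ∈ bad f := by
        simp only [bad, Finset.mem_filter, Finset.mem_univ, true_and]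
        exact ⟨hab, hn⟩
      rw [Finset.card_eq_zero.mp (Nat.le_zero.mp h3)] at hmem
      exact absurd hmem (Finset.notMem_empty _)
    | succ k ih =>
      intro f h1 h2 h3
      by_cases hle : (bad f).card ≤ k
      · exact ih f h1 h2 hle
      · have hpos : 0 < (bad f).card := by omega
        obtain ⟨p, hp⟩ := Finset.card_pos.mp hpos
        simp only [bad, Finset.mem_filter, Finset.mem_univ, true_and] at hp
        obtain ⟨hadj, hnadj⟩ := hp
        by_cases hy : p.2 ∈ S
        · by_cases hx : p.1 ∈ S
          · exact absurd (by rw [h2 _ hx, h2 _ hy]; exact hemb _ hx _ hy hadj) hnadj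
          · obtain ⟨g, hg1, hg2, hg3⟩ :=
              improve f h1 h2 p.2 p.1 hadj.symm (fun h => hnadj h.symm) hx
            exact ih g hg1 hg2 (by have := Finset.card_lt_card hg3; omega)
        · obtain ⟨g, hg1, hg2, hg3⟩ := improve f h1 h2 p.1 p.2 hadj hnadj hy
          exact ih g hg1 hg2 (by have := Finset.card_lt_card hg3; omega)
  exact main (bad f0).card f0 hf0inj hf0ext le_rfl
end

section
/- Let Δ be a positive integer, G an n-vertex graph with minimum degree δ(G) ≥ ((2Δ−1)/(2Δ))·n, and H an n-vertex graph with maximum degree Δ(H) ≤ Δ. Then H is a spanning subgraph of G, i.e., there exists an injective map φ : V(H) → V(G) with φ(x)φ(y) ∈ E(G) for every edge xy of H. -/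
open Finset

/-- The set of ordered pairs corresponding to edges of `H` mapped by `σ` to non-edges of `G`. -/
def badPairs {V W : Type*} [Fintype V] [DecidableEq V]
    (H : SimpleGraph V) (G : SimpleGraph W)
    [DecidableRel H.Adj] [DecidableRel G.Adj] (σ : V → W) : Finset (V × V) :=
  Finset.univ.filter (fun p => H.Adj p.1 p.2 ∧ ¬ G.Adj (σ p.1) (σ p.2))

lemma card_filter_equiv {V W : Type*} [Fintype V] [Fintype W] [DecidableEq W]
    (σ : V ≃ W) (q : W → Prop) [DecidablePred q] :
    (Finset.univ.filter (fun x => q (σ x))).card = (Finset.univ.filter q).card := by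
  rw [← Finset.card_map ⟨σ, σ.injective⟩]
  congr 1
  ext t
  simp only [Finset.mem_map, Finset.mem_filter, Finset.mem_univ, true_and,
    Function.Embedding.coeFn_mk]
  constructor
  · rintro ⟨x, hx, rfl⟩; exact hx
  · intro h; exact ⟨σ.symm t, by simpa using h, by simp⟩

/-- The Sauer–Spencer theorem. -/
theorem stmt1 {Δ n : ℕ} (hΔ : 0 < Δ)
    {V W : Type*} [Fintype V] [Fintype W] [DecidableEq V] [DecidableEq W]
    (H : SimpleGraph V) (G : SimpleGraph W)
    [DecidableRel H.Adj] [DecidableRel G.Adj]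
    (hV : Fintype.card V = n) (hW : Fintype.card W = n)
    (hG : ∀ v : W, ((2 * (Δ : ℝ) - 1) / (2 * Δ)) * n ≤ G.degree v)
    (hH : ∀ x : V, H.degree x ≤ Δ) :
    ∃ φ : V → W, Function.Injective φ ∧
      ∀ x y, H.Adj x y → G.Adj (φ x) (φ y) := by
  classical
  have hcard : Fintype.card V = Fintype.card W := hV.trans hW.symm
  have hΔR : (0:ℝ) < (Δ:ℝ) := by exact_mod_cast hΔ
  have h2Δ : (0:ℝ) < 2 * (Δ:ℝ) := by linarith
  have hΔ1 : (1:ℝ) ≤ (Δ:ℝ) := by exact_mod_cast hΔ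
  -- each vertex of `G` misses at most `n/(2Δ)` vertices
  have hdeg : ∀ s : W, (n:ℝ) - G.degree s ≤ (n:ℝ) / (2 * Δ) := by
    intro s
    have key : (n:ℝ) - ((2 * (Δ:ℝ) - 1) / (2 * Δ)) * n = (n:ℝ) / (2 * Δ) := by
      field_simp
      ring
    linarith [hG s, key]
  -- choose a bijection minimizing the number of bad pairs
  obtain ⟨σ, -, hmin⟩ := Finset.exists_min_image (Finset.univ : Finset (V ≃ W))
    (fun σ => (badPairs H G σ).card) ⟨Fintype.equivOfCardEq hcard, Finset.mem_univ _⟩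
  rcases Finset.eq_empty_or_nonempty (badPairs H G σ) with hb | hb
  · refine ⟨σ, σ.injective, fun x y hxy => ?_⟩
    by_contra h
    have hmem : (x, y) ∈ badPairs H G σ := by
      simp [badPairs, hxy, h]
    rw [hb] at hmem
    exact absurd hmem (Finset.notMem_empty _)
  exfalso
  obtain ⟨⟨u, v⟩, huvmem⟩ := hb
  have huv : H.Adj u v ∧ ¬ G.Adj (σ u) (σ v) := by
    simpa [badPairs] using huvmem
  -- the set of good targets for `u`
  set N : Finset V := H.neighborFinset u with hN
  set A : Finset W := Finset.univ.filter (fun t => ∀ x ∈ N, G.Adj t (σ x)) with hA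
  -- lower bound on `A.card`
  have hAcard : (n:ℝ) / 2 ≤ A.card := by
    set Ac : Finset W := Finset.univ.filter (fun t => ¬ ∀ x ∈ N, G.Adj t (σ x)) with hAc
    have hsplit : A.card + Ac.card = n := by
      rw [hA, hAc, Finset.card_filter_add_card_filter_not, Finset.card_univ, hW]
    have hsub : Ac ⊆ N.biUnion (fun x => Finset.univ.filter (fun t => ¬ G.Adj (σ x) t)) := by
      intro t ht
      rw [hAc, Finset.mem_filter] at ht
      push_neg at ht
      obtain ⟨x, hx, hax⟩ := ht.2
      rw [Finset.mem_biUnion]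
      refine ⟨x, hx, ?_⟩
      simp only [Finset.mem_filter, Finset.mem_univ, true_and]
      exact fun h => hax (G.adj_symm h)
    have hcount : ∀ x : V,
        ((Finset.univ.filter (fun t => ¬ G.Adj (σ x) t)).card : ℝ) = (n:ℝ) - G.degree (σ x) := by
      intro x
      have : Finset.univ.filter (fun t => ¬ G.Adj (σ x) t) = Finset.univ \ G.neighborFinset (σ x) := by
        ext t
        simp [SimpleGraph.mem_neighborFinset]
      rw [this, Finset.cast_card_sdiff (Finset.subset_univ _), Finset.card_univ, hW,
        SimpleGraph.card_neighborFinset_eq_degree]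
    have hAcbound : (Ac.card : ℝ) ≤ (n:ℝ) / 2 := by
      have h1 : (Ac.card : ℝ) ≤ ∑ x ∈ N, ((Finset.univ.filter (fun t => ¬ G.Adj (σ x) t)).card : ℝ) := by
        exact_mod_cast (Finset.card_le_card hsub).trans (Finset.card_biUnion_le)
      have h2 : ∑ x ∈ N, ((Finset.univ.filter (fun t => ¬ G.Adj (σ x) t)).card : ℝ)
          ≤ ∑ _x ∈ N, (n:ℝ) / (2 * Δ) := by
        refine Finset.sum_le_sum fun x _ => ?_
        rw [hcount x]
        exact hdeg (σ x)
      have h3 : ∑ _x ∈ N, (n:ℝ) / (2 * Δ) = (N.card : ℝ) * ((n:ℝ) / (2 * Δ)) := by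
        rw [Finset.sum_const, nsmul_eq_mul]
      have h4 : (N.card : ℝ) ≤ (Δ:ℝ) := by
        have : N.card = H.degree u := by rw [hN, SimpleGraph.card_neighborFinset_eq_degree]
        rw [this]
        exact_mod_cast hH u
      have h5 : (N.card : ℝ) * ((n:ℝ) / (2 * Δ)) ≤ (Δ:ℝ) * ((n:ℝ) / (2 * Δ)) := by
        apply mul_le_mul_of_nonneg_right h4
        positivity
      have h6 : (Δ:ℝ) * ((n:ℝ) / (2 * Δ)) = (n:ℝ) / 2 := by
        field_simp
      linarith
    have : (A.card : ℝ) + (Ac.card : ℝ) = (n:ℝ) := by exact_mod_cast hsplit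
    linarith
  -- the set of vertices `x ≠ u` whose image is not adjacent to `σ u`
  set T : Finset V := Finset.univ.filter (fun x => ¬ G.Adj (σ u) (σ x)) with hT
  have hTcard : (T.card : ℝ) = (n:ℝ) - G.degree (σ u) := by
    have h1 : T.card = (Finset.univ.filter (fun t => ¬ G.Adj (σ u) t)).card := by
      rw [hT]; exact card_filter_equiv σ (fun t => ¬ G.Adj (σ u) t)
    have h2 : Finset.univ.filter (fun t => ¬ G.Adj (σ u) t) = Finset.univ \ G.neighborFinset (σ u) := by
      ext t
      simp [SimpleGraph.mem_neighborFinset]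
    rw [h1, h2, Finset.cast_card_sdiff (Finset.subset_univ _), Finset.card_univ, hW,
      SimpleGraph.card_neighborFinset_eq_degree]
  have huT : u ∈ T := by
    rw [hT, Finset.mem_filter]
    exact ⟨Finset.mem_univ _, fun h => G.irrefl h⟩
  set S : Finset V := T.erase u with hS
  have hScard : (S.card : ℝ) = (T.card : ℝ) - 1 := by
    rw [hS, Finset.card_erase_of_mem huT]
    have : 1 ≤ T.card := Finset.card_pos.mpr ⟨u, huT⟩
    push_cast [Nat.cast_sub this]
    ring
  -- the set of vertices that would create a new conflict when swapped with u
  set B : Finset V := Finset.univ.filter (fun w' => ∃ x ∈ S, H.Adj w' x) with hB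
  have hBcard : (B.card : ℝ) ≤ (Δ:ℝ) * ((T.card : ℝ) - 1) := by
    have hsub : B ⊆ S.biUnion (fun x => H.neighborFinset x) := by
      intro w' hw'
      rw [hB, Finset.mem_filter] at hw'
      obtain ⟨x, hx, hadj⟩ := hw'.2
      rw [Finset.mem_biUnion]
      exact ⟨x, hx, by rw [SimpleGraph.mem_neighborFinset]; exact hadj.symm⟩
    have h1 : B.card ≤ ∑ x ∈ S, (H.neighborFinset x).card :=
      (Finset.card_le_card hsub).trans Finset.card_biUnion_le
    have h2 : ∑ x ∈ S, (H.neighborFinset x).card ≤ S.card * Δ := by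
      calc ∑ x ∈ S, (H.neighborFinset x).card ≤ ∑ _x ∈ S, Δ := by
            refine Finset.sum_le_sum fun x _ => ?_
            rw [SimpleGraph.card_neighborFinset_eq_degree]
            exact hH x
        _ = S.card * Δ := by rw [Finset.sum_const, smul_eq_mul]
    have h3 : (B.card : ℝ) ≤ (S.card : ℝ) * (Δ:ℝ) := by exact_mod_cast h1.trans h2
    rw [hScard] at h3
    linarith
  -- find a vertex to swap with
  set A' : Finset V := Finset.univ.filter (fun x => σ x ∈ A) with hA'
  have hA'card : A'.card = A.card := by
    have h := card_filter_equiv σ (fun t => t ∈ A)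
    rw [Finset.filter_univ_mem] at h
    rw [hA']; exact h
  have hBA : B.card < A'.card := by
    have hT2 : (T.card : ℝ) ≤ (n:ℝ) / (2 * Δ) := by rw [hTcard]; exact hdeg (σ u)
    have hfin : (B.card : ℝ) < (A'.card : ℝ) := by
      rw [hA'card]
      have : (Δ:ℝ) * ((T.card : ℝ) - 1) ≤ (n:ℝ) / 2 - (Δ:ℝ) := by
        have h6 : (Δ:ℝ) * ((n:ℝ) / (2 * Δ)) = (n:ℝ) / 2 := by field_simp
        nlinarith [hT2]
      linarith [hAcard, hBcard]
    exact_mod_cast hfin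
  have hw : ∃ w ∈ A', w ∉ B := by
    by_contra h
    push_neg at h
    exact absurd (Finset.card_le_card h) (not_le.2 hBA)
  obtain ⟨w, hwA', hwB⟩ := hw
  have hwA : ∀ x, H.Adj u x → G.Adj (σ w) (σ x) := by
    intro x hx
    rw [hA', Finset.mem_filter, hA, Finset.mem_filter] at hwA'
    exact hwA'.2.2 x (by rw [hN, SimpleGraph.mem_neighborFinset]; exact hx)
  have hwBadj : ∀ x, H.Adj w x → x ≠ u → G.Adj (σ u) (σ x) := by
    intro x hx hxu
    by_contra h
    apply hwB
    rw [hB, Finset.mem_filter]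
    refine ⟨Finset.mem_univ _, x, ?_, hx⟩
    rw [hS, Finset.mem_erase, hT, Finset.mem_filter]
    exact ⟨hxu, Finset.mem_univ _, h⟩
  have hwu : ¬ H.Adj u w := fun h => G.irrefl (hwA w h)
  have hwne : w ≠ u := by
    rintro rfl
    exact huv.2 (hwA v huv.1)
  -- the swapped bijection
  set σ' : V ≃ W := (Equiv.swap u w).trans σ with hσ'
  have hsub : badPairs H G σ' ⊆ (badPairs H G σ).erase (u, v) := by
    rintro ⟨x, y⟩ hp
    have hp' : H.Adj x y ∧ ¬ G.Adj (σ (Equiv.swap u w x)) (σ (Equiv.swap u w y)) := by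
      simpa [badPairs, hσ'] using hp
    have hxu : x ≠ u := by
      rintro rfl
      have hyu : y ≠ x := hp'.1.ne'
      have hyw : y ≠ w := by rintro rfl; exact hwu hp'.1
      apply hp'.2
      rw [Equiv.swap_apply_left, Equiv.swap_apply_of_ne_of_ne hyu hyw]
      exact hwA y hp'.1
    have hxw : x ≠ w := by
      rintro rfl
      have hyw : y ≠ x := hp'.1.ne'
      have hyu : y ≠ u := by rintro rfl; exact hwu hp'.1.symm
      apply hp'.2
      rw [Equiv.swap_apply_right, Equiv.swap_apply_of_ne_of_ne hyu hyw]
      exact hwBadj y hp'.1 hyu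
    have hyu : y ≠ u := by
      rintro rfl
      apply hp'.2
      rw [Equiv.swap_apply_left, Equiv.swap_apply_of_ne_of_ne hxu hxw]
      exact (hwA x hp'.1.symm).symm
    have hyw : y ≠ w := by
      rintro rfl
      apply hp'.2
      rw [Equiv.swap_apply_right, Equiv.swap_apply_of_ne_of_ne hxu hxw]
      exact (hwBadj x hp'.1.symm hxu).symm
    rw [Finset.mem_erase]
    constructor
    · intro h
      exact hxu (by injection h with h1 h2)
    · have : ¬ G.Adj (σ x) (σ y) := by
        rw [Equiv.swap_apply_of_ne_of_ne hxu hxw, Equiv.swap_apply_of_ne_of_ne hyu hyw] at hp'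
        exact hp'.2
      simp [badPairs, hp'.1, this]
  have hlt : (badPairs H G σ').card < (badPairs H G σ).card :=
    lt_of_le_of_lt (Finset.card_le_card hsub) (Finset.card_erase_lt_of_mem huvmem)
  exact absurd (hmin σ' (Finset.mem_univ _)) (not_le.2 hlt)
end

section
/- Let Δ ≥ 2 and let H be a graph with maximum degree Δ(H) ≤ Δ that contains no copy of K_{Δ+1} as a subgraph. Then m₁(H) ≤ (Δ+1)/2 − 1/(2(Δ+1)). -/
open SimpleGraph Finset

/-- The maximum 1-density of a graph `H`. -/
noncomputable def m1 {V : Type*} [Fintype V] (H : SimpleGraph V) : ℝ :=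
  sSup {d : ℝ | ∃ (H' : SimpleGraph V) (s : Set V), H' ≤ H ∧ 2 ≤ s.ncard ∧
      d = (Nat.card (H'.induce s).edgeSet : ℝ) / ((s.ncard : ℝ) - 1)}

lemma aux_nat {W : Type*} [Fintype W] (G : SimpleGraph W) [DecidableRel G.Adj] {Δ : ℕ}
    (hdeg : ∀ v, G.degree v ≤ Δ) (hfree : G.CliqueFree (Δ + 1)) :
    2 * (Δ + 1) * G.edgeFinset.card ≤ (Fintype.card W - 1) * (Δ ^ 2 + 2 * Δ) := by
  classical
  obtain ⟨n, hn⟩ : ∃ n, Fintype.card W = n := ⟨_, rfl⟩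
  obtain ⟨e, he⟩ : ∃ e, G.edgeFinset.card = e := ⟨_, rfl⟩
  rw [hn, he]
  rcases lt_trichotomy n (Δ + 1) with h | h | h
  · -- n ≤ Δ
    have h2 : 2 * e ≤ n * (n - 1) := by
      have h1 : e ≤ n.choose 2 := by rw [← he, ← hn]; exact G.card_edgeFinset_le_card_choose_two
      have h3 : n.choose 2 = n * (n - 1) / 2 := Nat.choose_two_right n
      omega
    calc 2 * (Δ + 1) * e = (Δ + 1) * (2 * e) := by ring
      _ ≤ (Δ + 1) * (n * (n - 1)) := Nat.mul_le_mul_left _ h2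
      _ = ((Δ + 1) * n) * (n - 1) := by ring
      _ ≤ (Δ ^ 2 + 2 * Δ) * (n - 1) := by
          have : (Δ + 1) * n ≤ Δ ^ 2 + 2 * Δ := by nlinarith [Nat.lt_succ_iff.mp h]
          exact Nat.mul_le_mul_right _ this
      _ = (n - 1) * (Δ ^ 2 + 2 * Δ) := by ring
  · -- n = Δ + 1 : use cliquefreeness
    have hne : ∃ a b : W, a ≠ b ∧ ¬ G.Adj a b := by
      by_contra hc
      push_neg at hc
      exact hfree Finset.univ ⟨fun a _ b _ hab => hc a b hab, by rw [Finset.card_univ, hn, h]⟩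
    obtain ⟨a, b, hab, hnadj⟩ := hne
    have hmem : s(a, b) ∈ (⊤ : SimpleGraph W).edgeFinset := by
      rw [mem_edgeFinset, mem_edgeSet]; exact hab
    have hsub : G.edgeFinset ⊆ ((⊤ : SimpleGraph W).edgeFinset).erase s(a, b) := by
      intro x hx
      rw [Finset.mem_erase]
      refine ⟨?_, edgeFinset_mono le_top hx⟩
      rintro rfl
      rw [mem_edgeFinset, mem_edgeSet] at hx
      exact hnadj hx
    have hcard : e ≤ (⊤ : SimpleGraph W).edgeFinset.card - 1 := by
      have h4 := Finset.card_le_card hsub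
      rw [Finset.card_erase_of_mem hmem, he] at h4
      exact h4
    have htop : (⊤ : SimpleGraph W).edgeFinset.card = (Δ + 1) * Δ / 2 := by
      rw [card_edgeFinset_top_eq_card_choose_two, hn, h, Nat.choose_two_right,
        Nat.add_sub_cancel]
    obtain ⟨k, hk⟩ : ∃ k, (Δ + 1) * Δ = 2 * k := by
      have : Even (Δ * (Δ + 1)) := Nat.even_mul_succ_self Δ
      obtain ⟨k, hk⟩ := this
      exact ⟨k, by rw [mul_comm]; omega⟩
    have hpos : 0 < (⊤ : SimpleGraph W).edgeFinset.card := Finset.card_pos.mpr ⟨_, hmem⟩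
    rw [htop, hk] at hcard hpos
    have h2 : 2 * e + 2 ≤ 2 * k := by omega
    have h5 : n - 1 = Δ := by omega
    rw [h5]
    nlinarith [h2, hk]
  · -- n ≥ Δ + 2 : degree sum
    obtain ⟨m, hm'⟩ : ∃ m, n = m + 1 := ⟨n - 1, by omega⟩
    have hm : Δ + 1 ≤ m := by omega
    have h2 : 2 * e ≤ (m + 1) * Δ := by
      rw [← he, ← G.sum_degrees_eq_twice_card_edges]
      calc ∑ v, G.degree v ≤ Finset.univ.card * Δ :=
            Finset.sum_le_card_nsmul _ _ Δ (fun v _ => hdeg v)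
        _ = (m + 1) * Δ := by rw [Finset.card_univ, hn, hm']
    have h5 : n - 1 = m := by omega
    rw [h5]
    nlinarith [h2, hm]

lemma aux_real {W : Type*} [Fintype W] (G : SimpleGraph W) [DecidableRel G.Adj] {Δ : ℕ}
    (hdeg : ∀ v, G.degree v ≤ Δ) (hfree : G.CliqueFree (Δ + 1))
    (hcard : 2 ≤ Fintype.card W) :
    (G.edgeFinset.card : ℝ) / ((Fintype.card W : ℝ) - 1) ≤
      ((Δ : ℝ) + 1) / 2 - 1 / (2 * ((Δ : ℝ) + 1)) := by
  have hnat := aux_nat G hdeg hfree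
  have hΔpos : (0 : ℝ) < (Δ : ℝ) + 1 := by positivity
  have hkey : ((Δ : ℝ) + 1) / 2 - 1 / (2 * ((Δ : ℝ) + 1)) =
      ((Δ : ℝ) ^ 2 + 2 * Δ) / (2 * ((Δ : ℝ) + 1)) := by
    field_simp
    ring
  have hn1 : (0 : ℝ) < (Fintype.card W : ℝ) - 1 := by
    have : (2 : ℝ) ≤ (Fintype.card W : ℝ) := by exact_mod_cast hcard
    linarith
  rw [hkey, div_le_div_iff₀ hn1 (by positivity)]
  have hcast : (2 * (Δ + 1) * G.edgeFinset.card : ℝ) ≤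
      ((Fintype.card W : ℝ) - 1) * ((Δ : ℝ) ^ 2 + 2 * Δ) := by
    have := (Nat.cast_le (α := ℝ)).mpr hnat
    push_cast [Nat.cast_sub (by omega : 1 ≤ Fintype.card W)] at this
    convert this using 2 <;> push_cast <;> ring
  nlinarith [hcast]

/-- If `Δ ≥ 2`, `Δ(H) ≤ Δ` and `H` is `K_{Δ+1}`-free, then
`m₁(H) ≤ (Δ+1)/2 - 1/(2(Δ+1))`. -/
theorem stmt3 {Δ : ℕ} (hΔ : 2 ≤ Δ) {V : Type*} [Fintype V]
    (H : SimpleGraph V) [DecidableRel H.Adj]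
    (hH : ∀ x : V, H.degree x ≤ Δ)
    (hfree : H.CliqueFree (Δ + 1)) :
    m1 H ≤ ((Δ : ℝ) + 1) / 2 - 1 / (2 * ((Δ : ℝ) + 1)) := by
  classical
  have hrhs : (0 : ℝ) ≤ ((Δ : ℝ) + 1) / 2 - 1 / (2 * ((Δ : ℝ) + 1)) := by
    have h1 : (0 : ℝ) < (Δ : ℝ) + 1 := by positivity
    rw [sub_nonneg, div_le_div_iff₀ (by positivity) (by norm_num)]
    nlinarith
  apply Real.sSup_le _ hrhs
  rintro d ⟨H', s, hle, hs2, rfl⟩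
  haveI : Fintype ↥s := Fintype.ofFinite ↥s
  haveI : DecidableRel (H'.induce s).Adj := Classical.decRel _
  have hcardW : Fintype.card ↥s = s.ncard := by
    rw [← Nat.card_eq_fintype_card, Nat.card_coe_set_eq]
  have hNat : Nat.card (H'.induce s).edgeSet = (H'.induce s).edgeFinset.card := by
    rw [Nat.card_eq_fintype_card, edgeFinset, Set.toFinset_card]
  have hdeg : ∀ v : ↥s, (H'.induce s).degree v ≤ Δ := by
    intro v
    have hsub : ((H'.induce s).neighborFinset v).card ≤ (H.neighborFinset ↑v).card := by
      apply Finset.card_le_card_of_injOn (fun (u : ↥s) => (u : V))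
      · intro u hu
        rw [Finset.mem_coe, mem_neighborFinset] at hu ⊢
        exact hle hu
      · exact Set.injOn_of_injective Subtype.val_injective
    calc (H'.induce s).degree v = ((H'.induce s).neighborFinset v).card := rfl
      _ ≤ (H.neighborFinset ↑v).card := hsub
      _ = H.degree ↑v := rfl
      _ ≤ Δ := hH _
  have hfree' : (H'.induce s).CliqueFree (Δ + 1) :=
    (hfree.anti hle).comap (SimpleGraph.Embedding.induce s).isContained
  have hc2 : 2 ≤ Fintype.card ↥s := by rw [hcardW]; exact hs2
  have := aux_real (H'.induce s) hdeg hfree' hc2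
  rw [hcardW] at this
  rw [hNat]
  exact this
end

section
/- Let H and G be n-vertex graphs with Δ(H) ≤ Δ and suppose H has at least one edge. If there exists a (C/n)-vertex-spread probability measure μ on the set Emb(H,G) of embeddings of H into G, with C > 1, then the measure μ' on subsets of E(G) defined by μ'(F) = μ({φ ∈ Emb(H,G) : φ(E(H)) = F}) is a q-spread probability measure on the family F_H of edge-sets of copies of H in G, for q = (C²Δ)^{1/m₁(H)} · n^{−1/m₁(H)}, provided n is sufficiently large. -/
open scoped Classical

set_option linter.unusedSectionVars false
set_option maxHeartbeats 1000000

namespace Stmt9Aux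
open Finset

variable {W : Type} [Fintype W]

noncomputable def TS (S : Finset (Sym2 W)) : Finset W :=
  Finset.univ.filter (fun w => ∃ e ∈ S, w ∈ e)

def GS (S : Finset (Sym2 W)) : SimpleGraph W := SimpleGraph.fromEdgeSet ↑S

noncomputable def comps (S : Finset (Sym2 W)) : Finset ((GS S).ConnectedComponent) :=
  (TS S).image (GS S).connectedComponentMk

noncomputable def cc (S : Finset (Sym2 W)) : ℕ := (comps S).card

def ND (S : Finset (Sym2 W)) : Prop := ∀ e ∈ S, ¬ e.IsDiag

lemma mem_TS {S : Finset (Sym2 W)} {w : W} : w ∈ TS S ↔ ∃ e ∈ S, w ∈ e := by simp [TS]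

lemma GS_adj {S : Finset (Sym2 W)} {a b : W} :
    (GS S).Adj a b ↔ s(a, b) ∈ S ∧ a ≠ b := by
  simp [GS, SimpleGraph.fromEdgeSet_adj]

lemma GS_mono {S S' : Finset (Sym2 W)} (h : S' ⊆ S) : GS S' ≤ GS S :=
  SimpleGraph.fromEdgeSet_mono (by exact_mod_cast h)

lemma TS_erase_subset (S : Finset (Sym2 W)) (f : Sym2 W) : TS (S.erase f) ⊆ TS S := by
  intro w hw
  rw [mem_TS] at hw ⊢
  obtain ⟨e, he, hwe⟩ := hw
  exact ⟨e, Finset.mem_of_mem_erase he, hwe⟩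

/-- R1: deleting a non-bridge edge preserves reachability. -/
lemma reach_of_nonbridge {S : Finset (Sym2 W)} {u v : W}
    (hre : (GS (S.erase s(u, v))).Reachable u v) {a b : W}
    (h : (GS S).Reachable a b) : (GS (S.erase s(u, v))).Reachable a b := by
  obtain ⟨p⟩ := h
  induction p with
  | nil => exact SimpleGraph.Reachable.refl _
  | @cons a c b hadj p ih =>
    refine SimpleGraph.Reachable.trans ?_ ih
    rw [GS_adj] at hadj
    by_cases hf : s(a, c) = s(u, v)
    · rw [Sym2.eq_iff] at hf
      rcases hf with ⟨rfl, rfl⟩ | ⟨rfl, rfl⟩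
      · exact hre
      · exact hre.symm
    · exact SimpleGraph.Adj.reachable (by rw [GS_adj]; exact ⟨Finset.mem_erase.2 ⟨hf, hadj.1⟩, hadj.2⟩)

/-- R2: if `v` is a leaf (unique incident edge `s(u,v)`), walks avoiding `v` as endpoints
transfer to the deleted graph; walks starting at `v` transfer starting from `u`. -/
lemma reach_of_leaf {S : Finset (Sym2 W)} {u v : W} (huv : u ≠ v)
    (hleaf : ∀ g ∈ S, v ∈ g → g = s(u, v))
    {a b : W} (p : (GS S).Walk a b) (hb : b ≠ v) :
    (a ≠ v → (GS (S.erase s(u, v))).Reachable a b) ∧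
      (a = v → (GS (S.erase s(u, v))).Reachable u b) := by
  induction p with
  | nil =>
    refine ⟨fun _ => SimpleGraph.Reachable.refl _, fun h => absurd h hb⟩
  | @cons a c b hadj p ih =>
    rw [GS_adj] at hadj
    have ih' := ih hb
    constructor
    · intro ha
      by_cases hcv : c = v
      · subst hcv
        have hf : s(a, c) = s(u, c) := hleaf _ hadj.1 (Sym2.mem_mk_right a c)
        rw [Sym2.eq_iff] at hf
        have hau : a = u := by
          rcases hf with ⟨h1, _⟩ | ⟨h1, h2⟩
          · exact h1
          · exact absurd h1 ha
        subst hau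
        exact ih'.2 rfl
      · have hne : s(a, c) ≠ s(u, v) := by
          intro h
          rw [Sym2.eq_iff] at h
          rcases h with ⟨_, rfl⟩ | ⟨rfl, _⟩
          · exact hcv rfl
          · exact ha rfl
        have : (GS (S.erase s(u, v))).Adj a c := by
          rw [GS_adj]; exact ⟨Finset.mem_erase.2 ⟨hne, hadj.1⟩, hadj.2⟩
        exact this.reachable.trans (ih'.1 hcv)
    · intro hav
      subst hav
      have hf : s(a, c) = s(u, a) := hleaf _ hadj.1 (Sym2.mem_mk_left a c)
      have hcu : c = u := by
        rw [Sym2.eq_iff] at hf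
        rcases hf with ⟨h1, h2⟩ | ⟨h1, h2⟩
        · exact absurd h2.symm hadj.2
        · exact h2
      subst hcu
      exact ih'.1 huv

/-- a vertex reachable from elsewhere has an incident edge -/
lemma exists_adj_of_reachable {G : SimpleGraph W} {a b : W} (h : G.Reachable a b)
    (hne : a ≠ b) : ∃ c, G.Adj a c := by
  obtain ⟨p⟩ := h
  cases p with
  | nil => exact absurd rfl hne
  | cons h _ => exact ⟨_, h⟩


/-- all edges are bridges -/
def AB (S : Finset (Sym2 W)) : Prop :=
  ∀ g ∈ S, ∀ a b : W, g = s(a, b) → ¬ (GS (S.erase g)).Reachable a b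

lemma AB_anti {S' S : Finset (Sym2 W)} (hsub : S' ⊆ S) (h : AB S) : AB S' := by
  intro g hg a b hgab hre
  exact h g (hsub hg) a b hgab
    (hre.mono (GS_mono (Finset.erase_subset_erase _ hsub)))

/-- D': in an "all bridges" graph, from any directed edge (u,v) one finds a
degree-one vertex `w ≠ u` reachable from `v` avoiding the edge. -/
lemma exists_leaf_aux : ∀ N : ℕ, ∀ S : Finset (Sym2 W), S.card ≤ N → ND S → AB S →
    ∀ u v : W, s(u, v) ∈ S →
    ∃ w : W, w ≠ u ∧ (∃ h ∈ S, w ∈ h ∧ ∀ g ∈ S, w ∈ g → g = h) ∧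
      (GS (S.erase s(u, v))).Reachable v w := by
  intro N
  induction N with
  | zero => intro S hS _ _ u v huv; simp [Finset.card_eq_zero.1 (Nat.le_zero.1 hS)] at huv
  | succ N ih =>
    intro S hS hnd hab u v huv
    have hune : u ≠ v := fun h => hnd _ huv (by simp [Sym2.mk_isDiag_iff, h])
    by_cases hv : ∃ g ∈ S.erase s(u, v), v ∈ g
    · obtain ⟨g, hg, hvg⟩ := hv
      obtain ⟨x, hx⟩ := Sym2.mem_iff_exists.1 hvg
      rw [hx] at hg
      clear hvg hx
      have hgS : s(v, x) ∈ S := Finset.mem_of_mem_erase hg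
      have hvx : v ≠ x := fun h => hnd _ hgS (by simp [Sym2.mk_isDiag_iff, h])
      have hxu : x ≠ u := by
        rintro rfl
        exact (Finset.ne_of_mem_erase hg) (Sym2.eq_swap)
      have hpos : 1 ≤ S.card := Finset.card_pos.2 ⟨_, huv⟩
      have hcard : (S.erase s(u, v)).card ≤ N := by
        have := Finset.card_erase_of_mem huv
        omega
      obtain ⟨w, hwv, ⟨h, hh, hwh, huniq⟩, hreach⟩ :=
        ih (S.erase s(u, v)) hcard (fun e he => hnd e (Finset.mem_of_mem_erase he))
          (AB_anti (Finset.erase_subset _ _) hab) v x hg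
      by_cases hwu : w = u
      · exfalso
        rw [hwu] at hreach
        have h1 : (GS (S.erase s(u, v))).Reachable x u :=
          hreach.mono (GS_mono (Finset.erase_subset _ _))
        have h2 : (GS (S.erase s(u, v))).Adj v x := GS_adj.2 ⟨hg, hvx⟩
        exact hab _ huv u v rfl ((h2.reachable.trans h1).symm)
      · refine ⟨w, hwu, ⟨h, Finset.mem_of_mem_erase hh, hwh, ?_⟩, ?_⟩
        · intro g₂ hg₂ hwg₂
          by_cases hg₂f : g₂ = s(u, v)
          · exfalso
            subst hg₂f
            rcases Sym2.mem_iff.1 hwg₂ with rfl | rfl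
            · exact hwu rfl
            · exact hwv rfl
          · exact huniq g₂ (Finset.mem_erase.2 ⟨hg₂f, hg₂⟩) hwg₂
        · have h2 : (GS (S.erase s(u, v))).Adj v x := GS_adj.2 ⟨hg, hvx⟩
          exact h2.reachable.trans (hreach.mono (GS_mono (Finset.erase_subset _ _)))
    · push_neg at hv
      refine ⟨v, fun h => hune h.symm, ⟨s(u, v), huv, Sym2.mem_mk_right u v, ?_⟩,
        SimpleGraph.Reachable.refl _⟩
      intro g hg hvg
      by_contra hne
      exact hv g (Finset.mem_erase.2 ⟨hne, hg⟩) hvg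


lemma TS_mono {S S' : Finset (Sym2 W)} (h : S' ⊆ S) : TS S' ⊆ TS S := by
  intro w hw; rw [mem_TS] at hw ⊢; obtain ⟨e, he, hwe⟩ := hw; exact ⟨e, h he, hwe⟩

/-- cardinality transfer for component images -/
lemma card_image_mk_eq {S : Finset (Sym2 W)} {f : Sym2 W}
    (hfwd : ∀ w w', w ∈ TS (S.erase f) → w' ∈ TS (S.erase f) →
      (GS S).Reachable w w' → (GS (S.erase f)).Reachable w w') :
    ((TS (S.erase f)).image (GS S).connectedComponentMk).card = cc (S.erase f) := by
  have hle : GS (S.erase f) ≤ GS S := GS_mono (Finset.erase_subset _ _)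
  set F : (GS (S.erase f)).ConnectedComponent → (GS S).ConnectedComponent :=
    SimpleGraph.ConnectedComponent.map (SimpleGraph.Hom.ofLE hle) with hF
  have hcomp : ∀ w : W, F ((GS (S.erase f)).connectedComponentMk w)
      = (GS S).connectedComponentMk w := by
    intro w
    simp [hF, SimpleGraph.ConnectedComponent.map_mk]
  have himg : (TS (S.erase f)).image (GS S).connectedComponentMk
      = ((TS (S.erase f)).image (GS (S.erase f)).connectedComponentMk).image F := by
    rw [Finset.image_image]
    apply Finset.image_congr
    intro w _
    exact (hcomp w).symm
  rw [himg, cc, comps]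
  apply Finset.card_image_of_injOn
  intro a ha b hb hab
  obtain ⟨w, hw, rfl⟩ := Finset.mem_image.1 (Finset.mem_coe.1 ha)
  obtain ⟨w', hw', rfl⟩ := Finset.mem_image.1 (Finset.mem_coe.1 hb)
  rw [hcomp, hcomp] at hab
  have hre : (GS S).Reachable w w' := (SimpleGraph.ConnectedComponent.eq).1 hab
  exact (SimpleGraph.ConnectedComponent.eq).2 (hfwd w w' hw hw' hre)

lemma cc_eq_of_TS_eq {S : Finset (Sym2 W)} {f : Sym2 W}
    (hTS : TS (S.erase f) = TS S)
    (hfwd : ∀ w w', w ∈ TS (S.erase f) → w' ∈ TS (S.erase f) →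
      (GS S).Reachable w w' → (GS (S.erase f)).Reachable w w') :
    cc S = cc (S.erase f) := by
  rw [cc, comps, ← hTS, card_image_mk_eq hfwd]



lemma sym2_ne {S : Finset (Sym2 W)} (hnd : ND S) {a b : W} (h : s(a, b) ∈ S) : a ≠ b :=
  fun hab => hnd _ h (by simp [Sym2.mk_isDiag_iff, hab])

lemma leaf_not_mem_TS_erase {S : Finset (Sym2 W)} {u v : W}
    (hleaf : ∀ g ∈ S, v ∈ g → g = s(u, v)) : v ∉ TS (S.erase s(u, v)) := by
  rw [mem_TS]
  rintro ⟨g, hg, hvg⟩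
  exact (Finset.ne_of_mem_erase hg) (hleaf g (Finset.mem_of_mem_erase hg) hvg)

lemma leaf_transfer {S : Finset (Sym2 W)} {u v : W} (huv : u ≠ v)
    (hleaf : ∀ g ∈ S, v ∈ g → g = s(u, v)) :
    ∀ w w', w ∈ TS (S.erase s(u, v)) → w' ∈ TS (S.erase s(u, v)) →
      (GS S).Reachable w w' → (GS (S.erase s(u, v))).Reachable w w' := by
  intro w w' hw hw' hre
  have hv := leaf_not_mem_TS_erase hleaf
  obtain ⟨p⟩ := hre
  exact (reach_of_leaf huv hleaf p (fun h => hv (h ▸ hw'))).1 (fun h => hv (h ▸ hw))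

lemma TS_insert_leaf {S : Finset (Sym2 W)} {u v : W}
    (hf : s(u, v) ∈ S) (hleaf : ∀ g ∈ S, v ∈ g → g = s(u, v))
    (hu : u ∈ TS (S.erase s(u, v))) :
    TS S = insert v (TS (S.erase s(u, v))) := by
  ext w
  rw [mem_TS, Finset.mem_insert]
  constructor
  · rintro ⟨e, he, hwe⟩
    by_cases hef : e = s(u, v)
    · subst hef
      rcases Sym2.mem_iff.1 hwe with rfl | rfl
      · exact Or.inr hu
      · exact Or.inl rfl
    · exact Or.inr (mem_TS.2 ⟨e, Finset.mem_erase.2 ⟨hef, he⟩, hwe⟩)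
  · rintro (h | hw)
    · exact ⟨s(u, v), hf, by rw [h]; exact Sym2.mem_mk_right u v⟩
    · exact mem_TS.1 (TS_mono (Finset.erase_subset _ _) hw)

lemma TS_insert_iso {S : Finset (Sym2 W)} {u v : W}
    (hf : s(u, v) ∈ S) (hleafv : ∀ g ∈ S, v ∈ g → g = s(u, v))
    (hleafu : ∀ g ∈ S, u ∈ g → g = s(u, v)) :
    TS S = insert u (insert v (TS (S.erase s(u, v)))) := by
  ext w
  rw [mem_TS, Finset.mem_insert, Finset.mem_insert]
  constructor
  · rintro ⟨e, he, hwe⟩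
    by_cases hef : e = s(u, v)
    · subst hef
      rcases Sym2.mem_iff.1 hwe with rfl | rfl
      · exact Or.inl rfl
      · exact Or.inr (Or.inl rfl)
    · exact Or.inr (Or.inr (mem_TS.2 ⟨e, Finset.mem_erase.2 ⟨hef, he⟩, hwe⟩))
  · rintro (h | h | hw)
    · exact ⟨s(u, v), hf, by rw [h]; exact Sym2.mem_mk_left u v⟩
    · exact ⟨s(u, v), hf, by rw [h]; exact Sym2.mem_mk_right u v⟩
    · exact mem_TS.1 (TS_mono (Finset.erase_subset _ _) hw)

lemma cc_leaf {S : Finset (Sym2 W)} {u v : W} (huv : u ≠ v)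
    (hf : s(u, v) ∈ S) (hleaf : ∀ g ∈ S, v ∈ g → g = s(u, v))
    (hu : u ∈ TS (S.erase s(u, v))) :
    cc (S.erase s(u, v)) = cc S := by
  have hmkeq : (GS S).connectedComponentMk v = (GS S).connectedComponentMk u :=
    (SimpleGraph.ConnectedComponent.eq).2 (SimpleGraph.Adj.reachable (GS_adj.2 ⟨hf, huv⟩)).symm
  have h1 : comps S = (TS (S.erase s(u, v))).image (GS S).connectedComponentMk := by
    rw [comps, TS_insert_leaf hf hleaf hu, Finset.image_insert, hmkeq]
    exact Finset.insert_eq_self.2 (Finset.mem_image_of_mem _ hu)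
  have h2 : cc S = cc (S.erase s(u, v)) := by
    rw [cc, h1, card_image_mk_eq (leaf_transfer huv hleaf)]
  exact h2.symm

lemma cc_iso {S : Finset (Sym2 W)} {u v : W} (huv : u ≠ v)
    (hf : s(u, v) ∈ S) (hleafv : ∀ g ∈ S, v ∈ g → g = s(u, v))
    (hleafu : ∀ g ∈ S, u ∈ g → g = s(u, v)) :
    cc S = cc (S.erase s(u, v)) + 1 := by
  have hmkeq : (GS S).connectedComponentMk v = (GS S).connectedComponentMk u :=
    (SimpleGraph.ConnectedComponent.eq).2 (SimpleGraph.Adj.reachable (GS_adj.2 ⟨hf, huv⟩)).symm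
  have hunot : u ∉ TS (S.erase s(u, v)) := by
    rw [mem_TS]
    rintro ⟨g, hg, hug⟩
    exact (Finset.ne_of_mem_erase hg) (hleafu g (Finset.mem_of_mem_erase hg) hug)
  have hsep : (GS S).connectedComponentMk u ∉
      (TS (S.erase s(u, v))).image (GS S).connectedComponentMk := by
    rw [Finset.mem_image]
    rintro ⟨w, hw, hmk⟩
    have hre : (GS S).Reachable w u := (SimpleGraph.ConnectedComponent.eq).1 hmk
    have hwv : w ≠ v := fun h => leaf_not_mem_TS_erase hleafv (h ▸ hw)
    obtain ⟨p⟩ := hre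
    have hre' : (GS (S.erase s(u, v))).Reachable w u :=
      (reach_of_leaf huv hleafv p huv).1 hwv
    have hwu : w ≠ u := fun h => hunot (h ▸ hw)
    obtain ⟨c, hc⟩ := exists_adj_of_reachable hre'.symm (Ne.symm hwu)
    rw [GS_adj] at hc
    exact (Finset.ne_of_mem_erase hc.1)
      (hleafu _ (Finset.mem_of_mem_erase hc.1) (Sym2.mem_mk_left u c))
  have h1 : comps S = insert ((GS S).connectedComponentMk u)
      ((TS (S.erase s(u, v))).image (GS S).connectedComponentMk) := by
    rw [comps, TS_insert_iso hf hleafv hleafu, Finset.image_insert, Finset.image_insert,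
      hmkeq, Finset.insert_idem]
  rw [cc, h1, Finset.card_insert_of_notMem hsep,
    card_image_mk_eq (leaf_transfer huv hleafv)]

/-- The trichotomy: a good edge to delete always exists. -/
lemma trichotomy {S : Finset (Sym2 W)} (hne : S.Nonempty) (hnd : ND S) :
    ∃ u v : W, s(u, v) ∈ S ∧ u ≠ v ∧
      ((TS (S.erase s(u, v)) = TS S ∧ cc (S.erase s(u, v)) = cc S) ∨
       ((∀ g ∈ S, v ∈ g → g = s(u, v)) ∧ u ∈ TS (S.erase s(u, v)) ∧
         v ∉ TS (S.erase s(u, v)) ∧ TS S = insert v (TS (S.erase s(u, v))) ∧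
         cc (S.erase s(u, v)) = cc S) ∨
       ((∀ g ∈ S, v ∈ g → g = s(u, v)) ∧ (∀ g ∈ S, u ∈ g → g = s(u, v)) ∧
         u ∉ insert v (TS (S.erase s(u, v))) ∧ v ∉ TS (S.erase s(u, v)) ∧
         TS S = insert u (insert v (TS (S.erase s(u, v)))) ∧
         cc S = cc (S.erase s(u, v)) + 1)) := by
  by_cases hL : ∃ (v : W) (e : Sym2 W), e ∈ S ∧ v ∈ e ∧ ∀ g ∈ S, v ∈ g → g = e
  · obtain ⟨v, e, he, hve, hleaf⟩ := hL
    obtain ⟨u, hu⟩ := Sym2.mem_iff_exists.1 hve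
    have heq : e = s(u, v) := by rw [hu]; exact Sym2.eq_swap
    rw [heq] at he hleaf
    have huv : u ≠ v := Ne.symm (sym2_ne hnd (by rwa [Sym2.eq_swap]))
    refine ⟨u, v, he, huv, ?_⟩
    by_cases hu2 : u ∈ TS (S.erase s(u, v))
    · exact Or.inr (Or.inl ⟨hleaf, hu2, leaf_not_mem_TS_erase hleaf,
        TS_insert_leaf he hleaf hu2, cc_leaf huv he hleaf hu2⟩)
    · have hleafu : ∀ g ∈ S, u ∈ g → g = s(u, v) := by
        intro g hg hug
        by_contra hgf
        exact hu2 (mem_TS.2 ⟨g, Finset.mem_erase.2 ⟨hgf, hg⟩, hug⟩)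
      refine Or.inr (Or.inr ⟨hleaf, hleafu, ?_, leaf_not_mem_TS_erase hleaf,
        TS_insert_iso he hleaf hleafu, cc_iso huv he hleaf hleafu⟩)
      rw [Finset.mem_insert]
      rintro (rfl | h)
      · exact huv rfl
      · exact hu2 h
  · push_neg at hL
    have hL' : ∀ (v : W) (e : Sym2 W), e ∈ S → v ∈ e → ∃ g ∈ S, v ∈ g ∧ g ≠ e := by
      intro v e he hve
      obtain ⟨g, hg, hvg, hgne⟩ := hL v e he hve
      exact ⟨g, hg, hvg, hgne⟩
    by_cases hNB : ∃ u v : W, s(u, v) ∈ S ∧ (GS (S.erase s(u, v))).Reachable u v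
    · obtain ⟨u, v, hf, hre⟩ := hNB
      have huv : u ≠ v := sym2_ne hnd hf
      have hTS : TS (S.erase s(u, v)) = TS S := by
        apply Finset.Subset.antisymm (TS_mono (Finset.erase_subset _ _))
        intro w hw
        obtain ⟨e, he, hwe⟩ := mem_TS.1 hw
        obtain ⟨g, hg, hwg, hgne⟩ := hL' w e he hwe
        by_cases hef : e = s(u, v)
        · exact mem_TS.2 ⟨g, Finset.mem_erase.2 ⟨by rwa [hef] at hgne, hg⟩, hwg⟩
        · exact mem_TS.2 ⟨e, Finset.mem_erase.2 ⟨hef, he⟩, hwe⟩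
      refine ⟨u, v, hf, huv, Or.inl ⟨hTS, ?_⟩⟩
      exact (cc_eq_of_TS_eq hTS (fun w w' _ _ h => reach_of_nonbridge hre h)).symm
    · exfalso
      push_neg at hNB
      have hab : AB S := by
        intro g hg a b hgab hre
        exact hNB a b (hgab ▸ hg) (by rwa [← hgab])
      obtain ⟨f, hf⟩ := hne
      have hf2 : ∃ a b : W, s(a, b) ∈ S := by
        induction f using Sym2.ind with
        | _ a b => exact ⟨a, b, hf⟩
      obtain ⟨a, b, hab2⟩ := hf2
      obtain ⟨w, _, ⟨h, hh, hwh, huniq⟩, _⟩ :=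
        exists_leaf_aux S.card S le_rfl hnd hab a b hab2
      obtain ⟨g, hg, hwg, hgne⟩ := hL' w h hh hwh
      exact hgne (huniq g hg hwg)


/-! ### The partial-embedding counting -/

section Psi

variable {V : Type} [Fintype V]

/-- partial embeddings compatible with `S` -/
def Psi (H : SimpleGraph V) (S : Finset (Sym2 W)) (ψ : Finset (V × W)) : Prop :=
  (∀ p ∈ ψ, ∀ q ∈ ψ, (p.1 = q.1 ∨ p.2 = q.2) → p = q) ∧
  ψ.image Prod.snd = TS S ∧
  (∀ p ∈ ψ, ∀ q ∈ ψ, s(p.2, q.2) ∈ S → H.Adj p.1 q.1)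

noncomputable def PsiF (H : SimpleGraph V) (S : Finset (Sym2 W)) : Finset (Finset (V × W)) :=
  Finset.univ.filter (Psi H S)

noncomputable def Gsum (H : SimpleGraph V) (S : Finset (Sym2 W)) (r : ℝ) : ℝ :=
  ∑ ψ ∈ PsiF H S, r ^ ψ.card

lemma Gsum_nonneg {H : SimpleGraph V} {S : Finset (Sym2 W)} {r : ℝ} (hr : 0 ≤ r) :
    0 ≤ Gsum H S r :=
  Finset.sum_nonneg fun _ _ => pow_nonneg hr _

lemma fiber_sum_le {α β : Type*} [DecidableEq β] (A : Finset α) (B : Finset β)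
    (rmap : α → β) (hmaps : ∀ a ∈ A, rmap a ∈ B) (g : α → ℝ) (bound : β → ℝ)
    (hb : ∀ b ∈ B, ∑ a ∈ A.filter (fun a => rmap a = b), g a ≤ bound b) :
    ∑ a ∈ A, g a ≤ ∑ b ∈ B, bound b := by
  rw [← Finset.sum_fiberwise_of_maps_to hmaps g]
  exact Finset.sum_le_sum hb

lemma claimB (H : SimpleGraph V) (Δ : ℕ) (hΔ : 0 < Δ)
    (hdeg : ∀ x : V, (Finset.univ.filter (fun y => H.Adj x y)).card ≤ Δ)
    (C nn : ℝ) (hC : 0 < C) (hn : 0 < nn) (hcardV : (Fintype.card V : ℝ) ≤ nn) :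
    ∀ N : ℕ, ∀ S : Finset (Sym2 W), S.card ≤ N → ND S →
      Gsum H S (C / nn) ≤ C ^ (TS S).card * ((Δ : ℝ) / nn) ^ (((TS S).card : ℝ) - cc S) := by
  have hr : (0 : ℝ) ≤ C / nn := le_of_lt (div_pos hC hn)
  have hdn : (0 : ℝ) < (Δ : ℝ) / nn := div_pos (by exact_mod_cast hΔ) hn

  have hTSempty : TS (∅ : Finset (Sym2 W)) = ∅ := by ext w; simp [mem_TS]
  have hccempty : cc (∅ : Finset (Sym2 W)) = 0 := by
    rw [cc, comps, hTSempty]; simp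
  have hPsiempty : PsiF H (∅ : Finset (Sym2 W)) = {∅} := by
    ext ψ
    rw [PsiF, Finset.mem_filter, Finset.mem_singleton]
    constructor
    · rintro ⟨_, _, h2, _⟩
      rw [hTSempty, Finset.image_eq_empty] at h2
      exact h2
    · rintro rfl
      refine ⟨Finset.mem_univ _, by simp, by simp [hTSempty], by simp⟩
  have hbase : Gsum H (∅ : Finset (Sym2 W)) (C / nn) ≤
      C ^ (TS (∅ : Finset (Sym2 W))).card *
        ((Δ : ℝ) / nn) ^ (((TS (∅ : Finset (Sym2 W))).card : ℝ) - cc (∅ : Finset (Sym2 W))) := by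
    rw [Gsum, hPsiempty, hTSempty, hccempty]
    simp
  intro N
  induction N with
  | zero =>
    intro S hS hnd
    have hSe : S = ∅ := Finset.card_eq_zero.1 (Nat.le_zero.1 hS)
    subst hSe
    exact hbase
  | succ N ih =>
    intro S hS hnd
    rcases Finset.eq_empty_or_nonempty S with rfl | hne
    · exact hbase
    obtain ⟨u, v, hfS, huv, hcase⟩ := trichotomy hne hnd
    have hcard' : (S.erase s(u, v)).card ≤ N := by
      have h1 := Finset.card_erase_of_mem hfS
      have h2 : 1 ≤ S.card := Finset.card_pos.2 ⟨_, hfS⟩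
      omega
    have hnd' : ND (S.erase s(u, v)) := fun e he => hnd e (Finset.mem_of_mem_erase he)
    have IH := ih (S.erase s(u, v)) hcard' hnd'
    rcases hcase with ⟨hTS, hcc⟩ | ⟨hleaf, hxu, hvnot, hTS, hcc⟩ |
      ⟨hleafv, hleafu, hunot, hvnot, hTS, hcc⟩
    · -- case A : PsiF S ⊆ PsiF S'
      have hsub : PsiF H S ⊆ PsiF H (S.erase s(u, v)) := by
        intro ψ hψ
        rw [PsiF, Finset.mem_filter] at hψ ⊢
        obtain ⟨_, h1, h2, h3⟩ := hψ
        exact ⟨Finset.mem_univ _, h1, by rw [h2, hTS], fun p hp q hq hpq =>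
          h3 p hp q hq (Finset.mem_of_mem_erase hpq)⟩
      calc Gsum H S (C / nn) ≤ Gsum H (S.erase s(u, v)) (C / nn) :=
            Finset.sum_le_sum_of_subset_of_nonneg hsub
              (fun _ _ _ => pow_nonneg hr _)
        _ ≤ _ := by rw [hTS, hcc] at IH; exact IH
    · -- case B : leaf
      set S' := S.erase s(u, v) with hS'def
      have hmaps : ∀ ψ ∈ PsiF H S, ψ.filter (fun p => p.2 ≠ v) ∈ PsiF H S' := by
        intro ψ hψ
        rw [PsiF, Finset.mem_filter] at hψ ⊢
        obtain ⟨_, h1, h2, h3⟩ := hψ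
        refine ⟨Finset.mem_univ _, ?_, ?_, ?_⟩
        · intro p hp q hq hpq
          exact h1 p (Finset.mem_of_mem_filter _ hp) q (Finset.mem_of_mem_filter _ hq) hpq
        · ext w
          simp only [Finset.mem_image, Finset.mem_filter]
          constructor
          · rintro ⟨p, ⟨hp, hpv⟩, rfl⟩
            have hw : p.2 ∈ TS S := h2 ▸ Finset.mem_image_of_mem _ hp
            rw [hTS, Finset.mem_insert] at hw
            rcases hw with h | h
            · exact absurd h hpv
            · exact h
          · intro hw
            have hw2 : w ∈ TS S := hTS ▸ Finset.mem_insert_of_mem hw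
            rw [← h2, Finset.mem_image] at hw2
            obtain ⟨p, hp, rfl⟩ := hw2
            exact ⟨p, ⟨hp, fun h => hvnot (h ▸ hw)⟩, rfl⟩
        · intro p hp q hq hpq
          exact h3 p (Finset.mem_of_mem_filter _ hp) q (Finset.mem_of_mem_filter _ hq)
            (Finset.mem_of_mem_erase hpq)
      have hinner : ∀ ψ' ∈ PsiF H S',
          ∑ ψ ∈ (PsiF H S).filter (fun ψ => ψ.filter (fun p => p.2 ≠ v) = ψ'), (C / nn) ^ ψ.card
            ≤ (Δ : ℝ) * (C / nn) ^ (ψ'.card + 1) := by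
        intro ψ' hψ'
        rw [PsiF, Finset.mem_filter] at hψ'
        obtain ⟨_, h1', h2', h3'⟩ := hψ'
        -- get x with (x, u) ∈ ψ'
        have hux : ∃ x, (x, u) ∈ ψ' := by
          have : u ∈ ψ'.image Prod.snd := h2' ▸ hxu
          rw [Finset.mem_image] at this
          obtain ⟨p, hp, hpu⟩ := this
          exact ⟨p.1, by rwa [show (p.1, u) = p from Prod.ext rfl hpu.symm]⟩
        obtain ⟨x, hx⟩ := hux
        have hsub2 : (PsiF H S).filter (fun ψ => ψ.filter (fun p => p.2 ≠ v) = ψ')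
            ⊆ (Finset.univ.filter (fun y => H.Adj x y)).image (fun y => insert (y, v) ψ') := by
          intro ψ hψ
          rw [Finset.mem_filter] at hψ
          obtain ⟨hψ2, hrψ⟩ := hψ
          rw [PsiF, Finset.mem_filter] at hψ2
          obtain ⟨_, h1, h2, h3⟩ := hψ2
          have hvmem : ∃ y, (y, v) ∈ ψ := by
            have : v ∈ ψ.image Prod.snd := h2 ▸ (hTS ▸ Finset.mem_insert_self v _)
            rw [Finset.mem_image] at this
            obtain ⟨p, hp, hpv⟩ := this
            exact ⟨p.1, by rwa [show (p.1, v) = p from Prod.ext rfl hpv.symm]⟩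
          obtain ⟨y, hy⟩ := hvmem
          have hψeq : ψ = insert (y, v) ψ' := by
            ext q
            rw [Finset.mem_insert, ← hrψ, Finset.mem_filter]
            constructor
            · intro hq
              by_cases hqv : q.2 = v
              · exact Or.inl (h1 q hq (y, v) hy (Or.inr hqv))
              · exact Or.inr ⟨hq, hqv⟩
            · rintro (rfl | ⟨hq, _⟩)
              · exact hy
              · exact hq
          have hadj : H.Adj x y := by
            have hxψ : (x, u) ∈ ψ := by
              rw [← hrψ, Finset.mem_filter] at hx
              exact hx.1
            have := h3 (y, v) hy (x, u) hxψ (by rwa [Sym2.eq_swap])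
            exact this.symm
          rw [Finset.mem_image]
          exact ⟨y, Finset.mem_filter.2 ⟨Finset.mem_univ _, hadj⟩, hψeq.symm⟩
        have hcardψ : ∀ ψ ∈ (PsiF H S).filter (fun ψ => ψ.filter (fun p => p.2 ≠ v) = ψ'),
            ψ.card = ψ'.card + 1 := by
          intro ψ hψ
          have hmem := hsub2 hψ
          rw [Finset.mem_image] at hmem
          obtain ⟨y, _, rfl⟩ := hmem
          rw [Finset.card_insert_of_notMem]
          intro hmem2
          have : v ∈ TS S' := h2' ▸ Finset.mem_image_of_mem Prod.snd hmem2
          exact hvnot this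
        calc ∑ ψ ∈ (PsiF H S).filter (fun ψ => ψ.filter (fun p => p.2 ≠ v) = ψ'),
              (C / nn) ^ ψ.card
            = ∑ ψ ∈ (PsiF H S).filter (fun ψ => ψ.filter (fun p => p.2 ≠ v) = ψ'),
              (C / nn) ^ (ψ'.card + 1) := Finset.sum_congr rfl (fun ψ hψ => by rw [hcardψ ψ hψ])
          _ = ((PsiF H S).filter (fun ψ => ψ.filter (fun p => p.2 ≠ v) = ψ')).card
              * (C / nn) ^ (ψ'.card + 1) := by rw [Finset.sum_const, nsmul_eq_mul]
          _ ≤ (Δ : ℝ) * (C / nn) ^ (ψ'.card + 1) := by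
              apply mul_le_mul_of_nonneg_right _ (pow_nonneg hr _)
              have hle1 : ((PsiF H S).filter (fun ψ => ψ.filter (fun p => p.2 ≠ v) = ψ')).card
                  ≤ ((Finset.univ.filter (fun y => H.Adj x y)).image (fun y => insert (y, v) ψ')).card :=
                Finset.card_le_card hsub2
              have hle2 := Finset.card_image_le (s := Finset.univ.filter (fun y => H.Adj x y))
                (f := fun y => insert (y, v) ψ')
              have := hdeg x
              exact_mod_cast le_trans hle1 (le_trans hle2 this)
      have hstep : Gsum H S (C / nn) ≤ (Δ : ℝ) * (C / nn) * Gsum H S' (C / nn) := by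
        have := fiber_sum_le (PsiF H S) (PsiF H S') _ hmaps _ _ hinner
        calc Gsum H S (C / nn) ≤ ∑ ψ' ∈ PsiF H S', (Δ : ℝ) * (C / nn) ^ (ψ'.card + 1) := this
          _ = (Δ : ℝ) * (C / nn) * Gsum H S' (C / nn) := by
              rw [Gsum, Finset.mul_sum]
              apply Finset.sum_congr rfl
              intro ψ' _
              ring
      have htcard : (TS S).card = (TS S').card + 1 := by
        rw [hTS, Finset.card_insert_of_notMem hvnot]
      calc Gsum H S (C / nn) ≤ (Δ : ℝ) * (C / nn) * Gsum H S' (C / nn) := hstep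
        _ ≤ (Δ : ℝ) * (C / nn) *
            (C ^ (TS S').card * ((Δ : ℝ) / nn) ^ (((TS S').card : ℝ) - cc S')) := by
            apply mul_le_mul_of_nonneg_left IH
            positivity
        _ = C ^ (TS S).card * ((Δ : ℝ) / nn) ^ (((TS S).card : ℝ) - cc S) := by
            rw [htcard, ← hcc]
            rw [show (((TS S').card + 1 : ℕ) : ℝ) - (cc S' : ℝ)
              = (((TS S').card : ℝ) - cc S') + 1 by push_cast; ring]
            rw [Real.rpow_add_one (ne_of_gt hdn)]
            rw [pow_succ]
            field_simp
    · -- case C : isolated edge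
      set S' := S.erase s(u, v) with hS'def
      have hunotS' : u ∉ TS S' := fun h => hunot (Finset.mem_insert_of_mem h)
      have humem : u ∈ TS S := hTS ▸ Finset.mem_insert_self u _
      have hvmemTS : v ∈ TS S := by
        rw [hTS]; exact Finset.mem_insert_of_mem (Finset.mem_insert_self v _)
      have hmaps : ∀ ψ ∈ PsiF H S,
          ψ.filter (fun p => p.2 ≠ u ∧ p.2 ≠ v) ∈ PsiF H S' := by
        intro ψ hψ
        rw [PsiF, Finset.mem_filter] at hψ ⊢
        obtain ⟨_, h1, h2, h3⟩ := hψ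
        refine ⟨Finset.mem_univ _, ?_, ?_, ?_⟩
        · intro p hp q hq hpq
          exact h1 p (Finset.mem_of_mem_filter _ hp) q (Finset.mem_of_mem_filter _ hq) hpq
        · ext w
          simp only [Finset.mem_image, Finset.mem_filter]
          constructor
          · rintro ⟨p, ⟨hp, hpu, hpv⟩, rfl⟩
            have hw : p.2 ∈ TS S := h2 ▸ Finset.mem_image_of_mem _ hp
            rw [hTS, Finset.mem_insert, Finset.mem_insert] at hw
            rcases hw with h | h | h
            · exact absurd h hpu
            · exact absurd h hpv
            · exact h
          · intro hw
            have hw2 : w ∈ TS S := by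
              rw [hTS]
              exact Finset.mem_insert_of_mem (Finset.mem_insert_of_mem hw)
            rw [← h2, Finset.mem_image] at hw2
            obtain ⟨p, hp, rfl⟩ := hw2
            exact ⟨p, ⟨hp, fun h => hunotS' (h ▸ hw), fun h => hvnot (h ▸ hw)⟩, rfl⟩
        · intro p hp q hq hpq
          exact h3 p (Finset.mem_of_mem_filter _ hp) q (Finset.mem_of_mem_filter _ hq)
            (Finset.mem_of_mem_erase hpq)
      have hinner : ∀ ψ' ∈ PsiF H S',
          ∑ ψ ∈ (PsiF H S).filter (fun ψ => ψ.filter (fun p => p.2 ≠ u ∧ p.2 ≠ v) = ψ'),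
            (C / nn) ^ ψ.card
            ≤ (Fintype.card V : ℝ) * (Δ : ℝ) * (C / nn) ^ (ψ'.card + 2) := by
        intro ψ' hψ'
        rw [PsiF, Finset.mem_filter] at hψ'
        obtain ⟨_, h1', h2', h3'⟩ := hψ'
        have hsub2 : (PsiF H S).filter (fun ψ => ψ.filter (fun p => p.2 ≠ u ∧ p.2 ≠ v) = ψ')
            ⊆ ((Finset.univ ×ˢ Finset.univ).filter (fun xy : V × V => H.Adj xy.1 xy.2)).image
              (fun xy => insert (xy.1, u) (insert (xy.2, v) ψ')) := by
          intro ψ hψ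
          rw [Finset.mem_filter] at hψ
          obtain ⟨hψ2, hrψ⟩ := hψ
          rw [PsiF, Finset.mem_filter] at hψ2
          obtain ⟨_, h1, h2, h3⟩ := hψ2
          have humem2 : ∃ x, (x, u) ∈ ψ := by
            have : u ∈ ψ.image Prod.snd := h2 ▸ humem
            rw [Finset.mem_image] at this
            obtain ⟨p, hp, hpu⟩ := this
            exact ⟨p.1, by rwa [show (p.1, u) = p from Prod.ext rfl hpu.symm]⟩
          have hvmem2 : ∃ y, (y, v) ∈ ψ := by
            have : v ∈ ψ.image Prod.snd := h2 ▸ hvmemTS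
            rw [Finset.mem_image] at this
            obtain ⟨p, hp, hpv⟩ := this
            exact ⟨p.1, by rwa [show (p.1, v) = p from Prod.ext rfl hpv.symm]⟩
          obtain ⟨x, hx⟩ := humem2
          obtain ⟨y, hy⟩ := hvmem2
          have hψeq : ψ = insert (x, u) (insert (y, v) ψ') := by
            ext q
            rw [Finset.mem_insert, Finset.mem_insert, ← hrψ, Finset.mem_filter]
            constructor
            · intro hq
              by_cases hqu : q.2 = u
              · exact Or.inl (h1 q hq (x, u) hx (Or.inr hqu))
              · by_cases hqv : q.2 = v
                · exact Or.inr (Or.inl (h1 q hq (y, v) hy (Or.inr hqv)))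
                · exact Or.inr (Or.inr ⟨hq, hqu, hqv⟩)
            · rintro (rfl | rfl | ⟨hq, _⟩)
              · exact hx
              · exact hy
              · exact hq
          have hadj : H.Adj x y := h3 (x, u) hx (y, v) hy hfS
          rw [Finset.mem_image]
          refine ⟨(x, y), Finset.mem_filter.2 ⟨Finset.mem_product.2
            ⟨Finset.mem_univ _, Finset.mem_univ _⟩, hadj⟩, hψeq.symm⟩
        have hvnotψ' : ∀ y : V, (y, v) ∉ ψ' := by
          intro y hmem
          exact hvnot (h2' ▸ Finset.mem_image_of_mem Prod.snd hmem)
        have hunotψ' : ∀ x : V, (x, u) ∉ ψ' := by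
          intro x hmem
          exact hunotS' (h2' ▸ Finset.mem_image_of_mem Prod.snd hmem)
        have hcardψ : ∀ ψ ∈ (PsiF H S).filter
            (fun ψ => ψ.filter (fun p => p.2 ≠ u ∧ p.2 ≠ v) = ψ'),
            ψ.card = ψ'.card + 2 := by
          intro ψ hψ
          have hmem := hsub2 hψ
          rw [Finset.mem_image] at hmem
          obtain ⟨xy, _, rfl⟩ := hmem
          rw [Finset.card_insert_of_notMem, Finset.card_insert_of_notMem (hvnotψ' xy.2)]
          rw [Finset.mem_insert]
          rintro (h | h)
          · exact huv (congrArg Prod.snd h)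
          · exact hunotψ' xy.1 h
        calc ∑ ψ ∈ (PsiF H S).filter (fun ψ => ψ.filter (fun p => p.2 ≠ u ∧ p.2 ≠ v) = ψ'),
              (C / nn) ^ ψ.card
            = ∑ ψ ∈ (PsiF H S).filter (fun ψ => ψ.filter (fun p => p.2 ≠ u ∧ p.2 ≠ v) = ψ'),
              (C / nn) ^ (ψ'.card + 2) := Finset.sum_congr rfl (fun ψ hψ => by rw [hcardψ ψ hψ])
          _ = ((PsiF H S).filter (fun ψ => ψ.filter (fun p => p.2 ≠ u ∧ p.2 ≠ v) = ψ')).card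
              * (C / nn) ^ (ψ'.card + 2) := by rw [Finset.sum_const, nsmul_eq_mul]
          _ ≤ (Fintype.card V : ℝ) * (Δ : ℝ) * (C / nn) ^ (ψ'.card + 2) := by
              apply mul_le_mul_of_nonneg_right _ (pow_nonneg hr _)
              have hle1 := Finset.card_le_card hsub2
              have hle2 := Finset.card_image_le
                (s := (Finset.univ ×ˢ Finset.univ).filter (fun xy : V × V => H.Adj xy.1 xy.2))
                (f := fun xy => insert (xy.1, u) (insert (xy.2, v) ψ'))
              have hle3 : ((Finset.univ ×ˢ Finset.univ).filter
                  (fun xy : V × V => H.Adj xy.1 xy.2)).card ≤ Fintype.card V * Δ := by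
                have hsub3 : (Finset.univ ×ˢ Finset.univ).filter
                    (fun xy : V × V => H.Adj xy.1 xy.2)
                    ⊆ Finset.univ.biUnion (fun x : V =>
                        (Finset.univ.filter (fun y => H.Adj x y)).image (fun y => (x, y))) := by
                  rintro ⟨x, y⟩ hxy
                  rw [Finset.mem_filter] at hxy
                  rw [Finset.mem_biUnion]
                  exact ⟨x, Finset.mem_univ _, Finset.mem_image_of_mem _
                    (Finset.mem_filter.2 ⟨Finset.mem_univ _, hxy.2⟩)⟩
                calc ((Finset.univ ×ˢ Finset.univ).filter
                    (fun xy : V × V => H.Adj xy.1 xy.2)).card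
                    ≤ (Finset.univ.biUnion (fun x : V =>
                        (Finset.univ.filter (fun y => H.Adj x y)).image (fun y => (x, y)))).card :=
                      Finset.card_le_card hsub3
                  _ ≤ ∑ x : V, ((Finset.univ.filter (fun y => H.Adj x y)).image
                        (fun y => (x, y))).card := Finset.card_biUnion_le
                  _ ≤ ∑ _x : V, Δ := Finset.sum_le_sum (fun x _ =>
                        le_trans Finset.card_image_le (hdeg x))
                  _ = Fintype.card V * Δ := by
                      rw [Finset.sum_const, smul_eq_mul, Finset.card_univ]
              have : ((PsiF H S).filter
                  (fun ψ => ψ.filter (fun p => p.2 ≠ u ∧ p.2 ≠ v) = ψ')).card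
                  ≤ Fintype.card V * Δ := le_trans hle1 (le_trans hle2 hle3)
              calc (((PsiF H S).filter
                  (fun ψ => ψ.filter (fun p => p.2 ≠ u ∧ p.2 ≠ v) = ψ')).card : ℝ)
                  ≤ ((Fintype.card V * Δ : ℕ) : ℝ) := by exact_mod_cast this
                _ = (Fintype.card V : ℝ) * (Δ : ℝ) := by push_cast; ring
      have hstep : Gsum H S (C / nn) ≤
          (Fintype.card V : ℝ) * (Δ : ℝ) * (C / nn) ^ 2 * Gsum H S' (C / nn) := by
        have := fiber_sum_le (PsiF H S) (PsiF H S') _ hmaps _ _ hinner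
        calc Gsum H S (C / nn)
            ≤ ∑ ψ' ∈ PsiF H S', (Fintype.card V : ℝ) * (Δ : ℝ) * (C / nn) ^ (ψ'.card + 2) := this
          _ = (Fintype.card V : ℝ) * (Δ : ℝ) * (C / nn) ^ 2 * Gsum H S' (C / nn) := by
              rw [Gsum, Finset.mul_sum]
              apply Finset.sum_congr rfl
              intro ψ' _
              ring
      have htcard : (TS S).card = (TS S').card + 2 := by
        rw [hTS, Finset.card_insert_of_notMem hunot, Finset.card_insert_of_notMem hvnot]
      have hGnonneg : 0 ≤ Gsum H S' (C / nn) := Gsum_nonneg hr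
      calc Gsum H S (C / nn)
          ≤ (Fintype.card V : ℝ) * (Δ : ℝ) * (C / nn) ^ 2 * Gsum H S' (C / nn) := hstep
        _ ≤ nn * (Δ : ℝ) * (C / nn) ^ 2 * Gsum H S' (C / nn) := by
            apply mul_le_mul_of_nonneg_right _ hGnonneg
            apply mul_le_mul_of_nonneg_right _ (pow_nonneg hr _)
            exact mul_le_mul_of_nonneg_right hcardV (Nat.cast_nonneg _)
        _ ≤ nn * (Δ : ℝ) * (C / nn) ^ 2 *
            (C ^ (TS S').card * ((Δ : ℝ) / nn) ^ (((TS S').card : ℝ) - cc S')) := by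
            apply mul_le_mul_of_nonneg_left IH
            have : (0:ℝ) ≤ (C / nn) ^ 2 := pow_nonneg hr _
            have h0 : (0:ℝ) ≤ nn * (Δ : ℝ) := by positivity
            exact mul_nonneg h0 this
        _ = C ^ (TS S).card * ((Δ : ℝ) / nn) ^ (((TS S).card : ℝ) - cc S) := by
            rw [htcard, hcc]
            rw [show (((TS S').card + 2 : ℕ) : ℝ) - ((cc S' + 1 : ℕ) : ℝ)
              = (((TS S').card : ℝ) - cc S') + 1 by push_cast; ring]
            rw [Real.rpow_add_one (ne_of_gt hdn)]
            rw [show (TS S').card + 2 = ((TS S').card + 1) + 1 from rfl, pow_succ, pow_succ]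
            field_simp
            ring

end Psi


/-! ### m1 bounds -/

section M1

variable {V : Type} [Fintype V]

/-- component of an edge -/
noncomputable def cmp (S : Finset (Sym2 W)) (e : Sym2 W) : (GS S).ConnectedComponent :=
  (GS S).connectedComponentMk e.out.1

lemma mk_eq_cmp_of_mem {S : Finset (Sym2 W)} {e : Sym2 W} (he : e ∈ S) (hnd : ND S)
    {w : W} (hw : w ∈ e) : (GS S).connectedComponentMk w = cmp S e := by
  rw [cmp]
  by_cases h : w = e.out.1
  · rw [h]
  · apply SimpleGraph.ConnectedComponent.sound
    apply SimpleGraph.Adj.reachable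
    rw [GS_adj]
    refine ⟨?_, h⟩
    have h1 : e.out.1 ∈ e := Sym2.out_fst_mem e
    have h2 : e = s(w, e.out.1) := ((Sym2.mem_and_mem_iff h).1 ⟨hw, h1⟩)
    rwa [← h2]

lemma cmp_mem_comps {S : Finset (Sym2 W)} (hnd : ND S) {e : Sym2 W} (he : e ∈ S) :
    cmp S e ∈ comps S := by
  rw [comps, Finset.mem_image]
  exact ⟨e.out.1, mem_TS.2 ⟨e, he, Sym2.out_fst_mem e⟩, rfl⟩

lemma endpoint_mem_TK {S : Finset (Sym2 W)} (hnd : ND S) {e : Sym2 W}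
    {K : (GS S).ConnectedComponent} (he : e ∈ S.filter (fun e => cmp S e = K))
    {w : W} (hw : w ∈ e) :
    w ∈ (TS S).filter (fun w => (GS S).connectedComponentMk w = K) := by
  rw [Finset.mem_filter] at he ⊢
  exact ⟨mem_TS.2 ⟨e, he.1, hw⟩, by rw [mk_eq_cmp_of_mem he.1 hnd hw, he.2]⟩

/-- each component contains at least two support vertices -/
lemma two_le_TK {S : Finset (Sym2 W)} (hnd : ND S) {K : (GS S).ConnectedComponent}
    (hK : K ∈ comps S) :
    2 ≤ ((TS S).filter (fun w => (GS S).connectedComponentMk w = K)).card := by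
  rw [comps, Finset.mem_image] at hK
  obtain ⟨w, hw, rfl⟩ := hK
  obtain ⟨e, he, hwe⟩ := mem_TS.1 hw
  obtain ⟨y, hy⟩ := Sym2.mem_iff_exists.1 hwe
  have hwy : w ≠ y := fun h => hnd e he (by rw [hy, Sym2.mk_isDiag_iff, h])
  have h1 : w ∈ (TS S).filter
      (fun x => (GS S).connectedComponentMk x = (GS S).connectedComponentMk w) :=
    Finset.mem_filter.2 ⟨hw, rfl⟩
  have h2 : y ∈ (TS S).filter
      (fun x => (GS S).connectedComponentMk x = (GS S).connectedComponentMk w) := by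
    refine Finset.mem_filter.2 ⟨mem_TS.2 ⟨e, he, by rw [hy]; exact Sym2.mem_mk_right w y⟩, ?_⟩
    apply SimpleGraph.ConnectedComponent.sound
    apply SimpleGraph.Adj.reachable
    rw [GS_adj]
    exact ⟨by rw [Sym2.eq_swap, ← hy]; exact he, fun h => hwy h.symm⟩
  calc 2 = ({w, y} : Finset W).card := (Finset.card_pair hwy).symm
    _ ≤ _ := Finset.card_le_card (by
        intro z hz
        rcases Finset.mem_insert.1 hz with rfl | hz2
        · exact h1
        · rw [Finset.mem_singleton] at hz2
          subst hz2
          exact h2)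

lemma t_decomp (S : Finset (Sym2 W)) :
    (TS S).card = ∑ K ∈ comps S,
      ((TS S).filter (fun w => (GS S).connectedComponentMk w = K)).card :=
  Finset.card_eq_sum_card_fiberwise (fun x hx => Finset.mem_image_of_mem _ hx)

lemma s_decomp {S : Finset (Sym2 W)} (hnd : ND S) :
    S.card = ∑ K ∈ comps S, (S.filter (fun e => cmp S e = K)).card :=
  Finset.card_eq_sum_card_fiberwise (fun e he => cmp_mem_comps hnd he)

lemma two_cc_le_t {S : Finset (Sym2 W)} (hnd : ND S) : 2 * cc S ≤ (TS S).card := by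
  rw [t_decomp S]
  calc 2 * cc S = ∑ _K ∈ comps S, 2 := by rw [Finset.sum_const, smul_eq_mul, cc]; ring
    _ ≤ _ := Finset.sum_le_sum (fun K hK => two_le_TK hnd hK)

lemma cc_le_t {S : Finset (Sym2 W)} (hnd : ND S) : cc S ≤ (TS S).card := by
  have := two_cc_le_t hnd
  omega

/-- the m1-defining set is bounded above -/
lemma m1_bddAbove (H : SimpleGraph V) :
    BddAbove {d : ℝ | ∃ (H' : SimpleGraph V) (s : Set V), H' ≤ H ∧ 2 ≤ s.ncard ∧
      d = (Nat.card (H'.induce s).edgeSet : ℝ) / ((s.ncard : ℝ) - 1)} := by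
  refine ⟨(Fintype.card (Sym2 V) : ℝ), ?_⟩
  rintro d ⟨H', s, _, hs, rfl⟩
  have hnum : (Nat.card (H'.induce s).edgeSet : ℝ) ≤ (Fintype.card (Sym2 V) : ℝ) := by
    have h1 : Nat.card (H'.induce s).edgeSet ≤ Nat.card (Sym2 V) := by
      apply Nat.card_le_card_of_injective
        (fun e => Sym2.map (Subtype.val : ↥s → V) e.val)
      intro e e' hee
      apply Subtype.ext
      exact Sym2.map.injective Subtype.val_injective hee
    have h2 : Nat.card (Sym2 V) = Fintype.card (Sym2 V) := Nat.card_eq_fintype_card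
    exact_mod_cast h2 ▸ h1
  have hden : (1 : ℝ) ≤ (s.ncard : ℝ) - 1 := by
    have : (2 : ℝ) ≤ (s.ncard : ℝ) := by exact_mod_cast hs
    linarith
  calc (Nat.card (H'.induce s).edgeSet : ℝ) / ((s.ncard : ℝ) - 1)
      ≤ (Nat.card (H'.induce s).edgeSet : ℝ) / 1 := by
        apply div_le_div_of_nonneg_left (Nat.cast_nonneg _) one_pos hden
    _ = (Nat.card (H'.induce s).edgeSet : ℝ) := by rw [div_one]
    _ ≤ (Fintype.card (Sym2 V) : ℝ) := hnum

lemma one_le_m1 {H : SimpleGraph V} (hH : H.edgeSet.Nonempty) : 1 ≤ m1 H := by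
  obtain ⟨e, he⟩ := hH
  have he2 : ∃ x y : V, H.Adj x y := by
    revert he
    induction e using Sym2.ind with
    | _ x y => intro he; exact ⟨x, y, he⟩
  obtain ⟨x, y, hxy⟩ := he2
  have hne := hxy.ne
  have hmem : (Nat.card (H.induce ({x, y} : Set V)).edgeSet : ℝ) / (((({x, y} : Set V)).ncard : ℝ) - 1)
      ∈ {d : ℝ | ∃ (H' : SimpleGraph V) (s : Set V), H' ≤ H ∧ 2 ≤ s.ncard ∧
        d = (Nat.card (H'.induce s).edgeSet : ℝ) / ((s.ncard : ℝ) - 1)} :=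
    ⟨H, {x, y}, le_refl _, by rw [Set.ncard_pair hne], rfl⟩
  have hge : (1 : ℝ) ≤ (Nat.card (H.induce ({x, y} : Set V)).edgeSet : ℝ) /
      (((({x, y} : Set V)).ncard : ℝ) - 1) := by
    rw [Set.ncard_pair hne]
    have hpos : 0 < Nat.card (H.induce ({x, y} : Set V)).edgeSet := by
      have : Nonempty (H.induce ({x, y} : Set V)).edgeSet := by
        refine ⟨⟨s(⟨x, by simp⟩, ⟨y, by simp⟩), ?_⟩⟩
        rw [SimpleGraph.mem_edgeSet]
        simp [hxy]
      exact Nat.card_pos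
    have : (1 : ℝ) ≤ (Nat.card (H.induce ({x, y} : Set V)).edgeSet : ℝ) := by
      exact_mod_cast hpos
    push_cast
    linarith
  exact le_trans hge (le_csSup (m1_bddAbove H) hmem)


lemma TS_empty : TS (∅ : Finset (Sym2 W)) = ∅ := by ext w; simp [mem_TS]

lemma cc_empty : cc (∅ : Finset (Sym2 W)) = 0 := by rw [cc, comps, TS_empty]; simp

lemma m1_bound {H : SimpleGraph V} {S : Finset (Sym2 W)} (hnd : ND S)
    {ψ₀ : Finset (V × W)} (hψ : Psi H S ψ₀) :
    (S.card : ℝ) ≤ m1 H * (((TS S).card : ℝ) - cc S) := by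
  obtain ⟨h1, h2, h3⟩ := hψ
  rcases Finset.eq_empty_or_nonempty S with rfl | hSne
  · simp [TS_empty, cc_empty]
  -- V is nonempty
  have hTSne : (TS S).Nonempty := by
    obtain ⟨e, he⟩ := hSne
    exact ⟨e.out.1, mem_TS.2 ⟨e, he, Sym2.out_fst_mem e⟩⟩
  have hNV : Nonempty V := by
    obtain ⟨w, hw⟩ := hTSne
    rw [← h2, Finset.mem_image] at hw
    obtain ⟨p, _, _⟩ := hw
    exact ⟨p.1⟩
  set invψ : W → V := fun w =>
    if h : ∃ p ∈ ψ₀, p.2 = w then h.choose.1 else Classical.choice hNV with hinvdef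
  have hinv : ∀ w ∈ TS S, (invψ w, w) ∈ ψ₀ := by
    intro w hw
    rw [← h2, Finset.mem_image] at hw
    obtain ⟨p, hp, hpw⟩ := hw
    have hex : ∃ p ∈ ψ₀, p.2 = w := ⟨p, hp, hpw⟩
    have hspec := hex.choose_spec
    rw [hinvdef]
    simp only [dif_pos hex]
    rw [show (hex.choose.1, w) = hex.choose from Prod.ext rfl hspec.2.symm]
    exact hspec.1
  have hinvinj : ∀ w ∈ TS S, ∀ w' ∈ TS S, invψ w = invψ w' → w = w' := by
    intro w hw w' hw' heq
    have := h1 (invψ w, w) (hinv w hw) (invψ w', w') (heq ▸ hinv w' hw') (Or.inl (by rw [heq]))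
    exact congrArg Prod.snd this
  -- per-component bound
  have hkey : ∀ K ∈ comps S, ((S.filter (fun e => cmp S e = K)).card : ℝ)
      ≤ m1 H * ((((TS S).filter (fun w => (GS S).connectedComponentMk w = K)).card : ℝ) - 1) := by
    intro K hK
    set TK := (TS S).filter (fun w => (GS S).connectedComponentMk w = K) with hTKdef
    have hTKsub : TK ⊆ TS S := Finset.filter_subset _ _
    have h2K : 2 ≤ TK.card := two_le_TK hnd hK
    set XK : Set V := ↑(TK.image invψ) with hXKdef
    have hXcard : XK.ncard = TK.card := by
      rw [hXKdef, Set.ncard_coe_finset]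
      apply Finset.card_image_of_injOn
      intro w hw w' hw' heq
      exact hinvinj w (hTKsub hw) w' (hTKsub hw') heq
    have hXK2 : 2 ≤ XK.ncard := hXcard ▸ h2K
    have hTKne : TK.Nonempty := Finset.card_pos.1 (by omega)
    obtain ⟨w₀, hw₀⟩ := hTKne
    have hx₀ : invψ w₀ ∈ XK := by
      rw [hXKdef, Finset.mem_coe]
      exact Finset.mem_image_of_mem _ hw₀
    set mW : W → ↥XK := fun w =>
      if h : invψ w ∈ XK then ⟨invψ w, h⟩ else ⟨invψ w₀, hx₀⟩ with hmWdef
    have hmWval : ∀ w ∈ TK, (mW w : V) = invψ w := by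
      intro w hw
      have h : invψ w ∈ XK := by
        rw [hXKdef, Finset.mem_coe]
        exact Finset.mem_image_of_mem _ hw
      rw [hmWdef]
      simp only [dif_pos h]
    -- injection into the edges of the induced subgraph
    have hstep1 : (S.filter (fun e => cmp S e = K)).card
        ≤ ((H.induce XK).edgeSet).toFinset.card := by
      apply Finset.card_le_card_of_injOn (Sym2.map mW)
      · intro e he
        have hend := fun {w} (hw : w ∈ e) => endpoint_mem_TK hnd he hw
        have heS : e ∈ S := (Finset.mem_filter.1 he).1
        revert hend heS
        induction e using Sym2.ind with
        | _ a b =>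
          intro hend heS
          have ha : a ∈ TK := hend (Sym2.mem_mk_left a b)
          have hb : b ∈ TK := hend (Sym2.mem_mk_right a b)
          rw [Sym2.map_pair_eq, Finset.mem_coe, Set.mem_toFinset, SimpleGraph.mem_edgeSet]
          have hadj : H.Adj (invψ a) (invψ b) :=
            h3 (invψ a, a) (hinv a (hTKsub ha)) (invψ b, b) (hinv b (hTKsub hb)) heS
          have : (H.induce XK).Adj (mW a) (mW b) := by
            simp only [SimpleGraph.comap_adj, Function.Embedding.coe_subtype]
            rw [hmWval a ha, hmWval b hb]
            exact hadj
          exact this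
      · intro e he e' he' heq
        rw [Finset.mem_coe] at he he'
        have hend := fun {w} (hw : w ∈ e) => endpoint_mem_TK hnd he hw
        have hend' := fun {w} (hw : w ∈ e') => endpoint_mem_TK hnd he' hw
        clear he he'
        revert heq hend hend'
        induction e using Sym2.ind with
        | _ a b =>
          induction e' using Sym2.ind with
          | _ a' b' =>
            intro heq hend hend'
            have ha : a ∈ TK := hend (Sym2.mem_mk_left a b)
            have hb : b ∈ TK := hend (Sym2.mem_mk_right a b)
            have ha' : a' ∈ TK := hend' (Sym2.mem_mk_left a' b')
            have hb' : b' ∈ TK := hend' (Sym2.mem_mk_right a' b')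
            rw [Sym2.map_pair_eq, Sym2.map_pair_eq, Sym2.eq_iff] at heq
            have hval : ∀ w ∈ TK, ∀ w' ∈ TK, mW w = mW w' → w = w' := by
              intro w hw w' hw' hmm
              apply hinvinj w (hTKsub hw) w' (hTKsub hw')
              rw [← hmWval w hw, ← hmWval w' hw', hmm]
            rw [Sym2.eq_iff]
            rcases heq with ⟨hq1, hq2⟩ | ⟨hq1, hq2⟩
            · exact Or.inl ⟨hval a ha a' ha' hq1, hval b hb b' hb' hq2⟩
            · exact Or.inr ⟨hval a ha b' hb' hq1, hval b hb a' ha' hq2⟩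
    -- relate to m1
    have hmem : (Nat.card (H.induce XK).edgeSet : ℝ) / ((XK.ncard : ℝ) - 1)
        ∈ {d : ℝ | ∃ (H' : SimpleGraph V) (s : Set V), H' ≤ H ∧ 2 ≤ s.ncard ∧
          d = (Nat.card (H'.induce s).edgeSet : ℝ) / ((s.ncard : ℝ) - 1)} :=
      ⟨H, XK, le_refl _, hXK2, rfl⟩
    have hle := le_csSup (m1_bddAbove H) hmem
    have hden : (0 : ℝ) < (XK.ncard : ℝ) - 1 := by
      have : (2 : ℝ) ≤ (XK.ncard : ℝ) := by exact_mod_cast hXK2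
      linarith
    have hcard2 : (Nat.card (H.induce XK).edgeSet : ℝ) ≤ m1 H * ((XK.ncard : ℝ) - 1) := by
      rw [div_le_iff₀ hden] at hle
      exact hle
    have hnatcard : Nat.card (H.induce XK).edgeSet = ((H.induce XK).edgeSet).toFinset.card := by
      rw [Nat.card_coe_set_eq, Set.ncard_eq_toFinset_card']
    calc ((S.filter (fun e => cmp S e = K)).card : ℝ)
        ≤ (((H.induce XK).edgeSet).toFinset.card : ℝ) := by exact_mod_cast hstep1
      _ = (Nat.card (H.induce XK).edgeSet : ℝ) := by rw [hnatcard]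
      _ ≤ m1 H * ((XK.ncard : ℝ) - 1) := hcard2
      _ = m1 H * ((TK.card : ℝ) - 1) := by rw [hXcard]
  -- sum over components
  have hs : (S.card : ℝ) = ∑ K ∈ comps S, ((S.filter (fun e => cmp S e = K)).card : ℝ) := by
    exact_mod_cast s_decomp hnd
  have ht : ((TS S).card : ℝ) = ∑ K ∈ comps S,
      (((TS S).filter (fun w => (GS S).connectedComponentMk w = K)).card : ℝ) := by
    exact_mod_cast t_decomp S
  calc (S.card : ℝ) = ∑ K ∈ comps S, ((S.filter (fun e => cmp S e = K)).card : ℝ) := hs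
    _ ≤ ∑ K ∈ comps S, m1 H *
        ((((TS S).filter (fun w => (GS S).connectedComponentMk w = K)).card : ℝ) - 1) :=
      Finset.sum_le_sum hkey
    _ = m1 H * (((TS S).card : ℝ) - cc S) := by
        rw [← Finset.mul_sum, Finset.sum_sub_distrib, Finset.sum_const, ← ht]
        simp [cc, smul_eq_mul]

end M1


end Stmt9Aux

open Stmt9Aux Finset in
/-- A `(C/n)`-vertex-spread probability measure on embeddings of `H` into `G`
induces a `(C²Δ)^{1/m₁(H)} n^{-1/m₁(H)}`-spread measure on the family of
edge sets of copies of `H` in `G`, for `n` sufficiently large. -/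
theorem stmt9 (Δ : ℕ) (hΔ : 0 < Δ) (C : ℝ) (hC : 1 < C) :
    ∃ n₀ : ℕ, ∀ n : ℕ, n₀ ≤ n →
    ∀ (V W : Type) [Fintype V] [Fintype W] [DecidableEq V] [DecidableEq W],
    ∀ (H : SimpleGraph V) (G : SimpleGraph W),
    Fintype.card V = n → Fintype.card W = n →
    (∀ x : V, Nat.card (H.neighborSet x) ≤ Δ) →
    H.edgeSet.Nonempty →
    ∀ μ : (V → W) → ℝ,
      (∀ φ, 0 ≤ μ φ) →
      (∀ φ, μ φ ≠ 0 → Function.Injective φ ∧ ∀ x y, H.Adj x y → G.Adj (φ x) (φ y)) →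
      (∑ φ : V → W, μ φ = 1) →
      (∀ (k : ℕ) (xs : Fin k → V) (vs : Fin k → W),
        Function.Injective xs → Function.Injective vs →
        ∑ φ ∈ Finset.univ.filter (fun φ : V → W => ∀ i, φ (xs i) = vs i), μ φ
          ≤ (C / n) ^ k) →
      ∀ S : Finset (Sym2 W), (S : Set (Sym2 W)) ⊆ G.edgeSet →
        ∑ φ ∈ Finset.univ.filter
            (fun φ : V → W => (S : Set (Sym2 W)) ⊆ Sym2.map φ '' H.edgeSet), μ φ
          ≤ ((C ^ 2 * (Δ : ℝ)) ^ (1 / m1 H) * (n : ℝ) ^ (-(1 / m1 H))) ^ S.card := by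
  refine ⟨max 1 ⌈C ^ 2 * (Δ : ℝ)⌉₊, ?_⟩
  intro n hn V W _ _ _ _ H G hV hW hdeg' hHne μ hμ0 hμsupp hμsum hspread S hSG
  have hn1 : 1 ≤ n := le_trans (le_max_left _ _) hn
  have hnpos : (0 : ℝ) < (n : ℝ) := by exact_mod_cast hn1
  have hC0 : (0 : ℝ) < C := lt_trans zero_lt_one hC
  have hCΔn : C ^ 2 * (Δ : ℝ) ≤ (n : ℝ) := by
    have h1 : ⌈C ^ 2 * (Δ : ℝ)⌉₊ ≤ n := le_trans (le_max_right _ _) hn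
    exact le_trans (Nat.le_ceil _) (by exact_mod_cast h1)
  have hnd : ND S := fun e he => G.not_isDiag_of_mem_edgeSet (hSG he)
  have hdeg : ∀ x : V, (Finset.univ.filter (fun y => H.Adj x y)).card ≤ Δ := by
    intro x
    have h1 : (Finset.univ.filter (fun y => H.Adj x y)) = (H.neighborSet x).toFinset := by
      ext y
      rw [Finset.mem_filter, Set.mem_toFinset]
      simp
    rw [h1, ← Set.ncard_eq_toFinset_card', ← Nat.card_coe_set_eq]
    exact hdeg' x
  set r : ℝ := C / (n : ℝ) with hrdef
  have hr : 0 ≤ r := le_of_lt (div_pos hC0 hnpos)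
  -- Step 1: the μ-mass of the event is at most Gsum
  have hleG : ∑ φ ∈ Finset.univ.filter
      (fun φ : V → W => (S : Set (Sym2 W)) ⊆ Sym2.map φ '' H.edgeSet), μ φ ≤ Gsum H S r := by
    set E := Finset.univ.filter
      (fun φ : V → W => (S : Set (Sym2 W)) ⊆ Sym2.map φ '' H.edgeSet) with hEdef
    set E0 := E.filter (fun φ => μ φ ≠ 0) with hE0def
    have hE0 : ∑ φ ∈ E0, μ φ = ∑ φ ∈ E, μ φ := Finset.sum_filter_ne_zero E
    set Φ : (V → W) → Finset (V × W) := fun φ =>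
      (Finset.univ.filter (fun x => φ x ∈ TS S)).image (fun x => (x, φ x)) with hΦdef
    have hmaps : ∀ φ ∈ E0, Φ φ ∈ PsiF H S := by
      intro φ hφ
      rw [hE0def, Finset.mem_filter, hEdef, Finset.mem_filter] at hφ
      obtain ⟨⟨-, hev⟩, hμne⟩ := hφ
      obtain ⟨hinj, hhom⟩ := hμsupp φ hμne
      rw [PsiF, Finset.mem_filter]
      refine ⟨Finset.mem_univ _, ?_, ?_, ?_⟩
      · intro p hp q hq hpq
        rw [hΦdef, Finset.mem_image] at hp hq
        obtain ⟨x, -, rfl⟩ := hp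
        obtain ⟨y, -, rfl⟩ := hq
        rcases hpq with h | h
        · simp only at h
          subst h
          rfl
        · simp only at h
          have : x = y := hinj h
          subst this
          rfl
      · ext w
        simp only [hΦdef, Finset.mem_image, Finset.mem_filter, Finset.mem_univ, true_and]
        constructor
        · rintro ⟨p, ⟨x, hx, rfl⟩, rfl⟩
          exact hx
        · intro hw
          obtain ⟨e, he, hwe⟩ := mem_TS.1 hw
          have hei : e ∈ Sym2.map φ '' H.edgeSet := hev he
          obtain ⟨e', he', rfl⟩ := hei
          obtain ⟨x, hxe, hφx⟩ := Sym2.mem_map.1 hwe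
          exact ⟨(x, φ x), ⟨x, by rw [hφx]; exact hw, rfl⟩, hφx⟩
      · intro p hp q hq hpq
        rw [hΦdef, Finset.mem_image] at hp hq
        obtain ⟨x, -, rfl⟩ := hp
        obtain ⟨y, -, rfl⟩ := hq
        simp only at hpq ⊢
        have hei : s(φ x, φ y) ∈ Sym2.map φ '' H.edgeSet := hev hpq
        obtain ⟨e', he', heq⟩ := hei
        revert he' heq
        induction e' using Sym2.ind with
        | _ a b =>
          intro he' heq
          rw [Sym2.map_pair_eq, Sym2.eq_iff] at heq
          rw [SimpleGraph.mem_edgeSet] at he'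
          rcases heq with ⟨h1, h2⟩ | ⟨h1, h2⟩
          · have ha := hinj h1
            have hb := hinj h2
            subst ha; subst hb
            exact he'
          · have ha := hinj h1
            have hb := hinj h2
            subst ha; subst hb
            exact he'.symm
    have hinner : ∀ ψ ∈ PsiF H S, ∑ φ ∈ E0.filter (fun φ => Φ φ = ψ), μ φ ≤ r ^ ψ.card := by
      intro ψ hψF
      rw [PsiF, Finset.mem_filter] at hψF
      obtain ⟨-, h1, h2, h3⟩ := hψF
      set k := ψ.card with hkdef
      set eq := ψ.equivFin with heqdef
      set xs : Fin k → V := fun i => ((eq.symm i) : V × W).1 with hxsdef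
      set vs : Fin k → W := fun i => ((eq.symm i) : V × W).2 with hvsdef
      have hxsinj : Function.Injective xs := by
        intro i j hij
        have hpq := h1 _ (eq.symm i).2 _ (eq.symm j).2 (Or.inl hij)
        have : eq.symm i = eq.symm j := Subtype.ext hpq
        exact eq.symm.injective this
      have hvsinj : Function.Injective vs := by
        intro i j hij
        have hpq := h1 _ (eq.symm i).2 _ (eq.symm j).2 (Or.inr hij)
        have : eq.symm i = eq.symm j := Subtype.ext hpq
        exact eq.symm.injective this
      have hsub : E0.filter (fun φ => Φ φ = ψ)
          ⊆ Finset.univ.filter (fun φ : V → W => ∀ i, φ (xs i) = vs i) := by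
        intro φ hφ
        rw [Finset.mem_filter] at hφ
        obtain ⟨-, hΦφ⟩ := hφ
        rw [Finset.mem_filter]
        refine ⟨Finset.mem_univ _, ?_⟩
        intro i
        have hmem : ((eq.symm i) : V × W) ∈ Φ φ := by rw [hΦφ]; exact (eq.symm i).2
        simp only [hΦdef, Finset.mem_image] at hmem
        obtain ⟨x, -, hx⟩ := hmem
        have hfst := congrArg Prod.fst hx
        have hsnd := congrArg Prod.snd hx
        simp only at hfst hsnd
        show φ ((↑(eq.symm i) : V × W).1) = (↑(eq.symm i) : V × W).2
        rw [← hfst, ← hsnd]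
      calc ∑ φ ∈ E0.filter (fun φ => Φ φ = ψ), μ φ
          ≤ ∑ φ ∈ Finset.univ.filter (fun φ : V → W => ∀ i, φ (xs i) = vs i), μ φ :=
            Finset.sum_le_sum_of_subset_of_nonneg hsub (fun φ _ _ => hμ0 φ)
        _ ≤ (C / (n : ℝ)) ^ k := hspread k xs vs hxsinj hvsinj
        _ = r ^ ψ.card := by rw [hrdef, hkdef]
    calc ∑ φ ∈ E, μ φ = ∑ φ ∈ E0, μ φ := hE0.symm
      _ = ∑ ψ ∈ PsiF H S, ∑ φ ∈ E0.filter (fun φ => Φ φ = ψ), μ φ :=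
          (Finset.sum_fiberwise_of_maps_to hmaps μ).symm
      _ ≤ ∑ ψ ∈ PsiF H S, r ^ ψ.card := Finset.sum_le_sum hinner
      _ = Gsum H S r := rfl
  -- Step 2: the analytic chain
  have hRHS0 : (0 : ℝ) ≤ ((C ^ 2 * (Δ : ℝ)) ^ (1 / m1 H) * (n : ℝ) ^ (-(1 / m1 H))) ^ S.card := by
    apply pow_nonneg
    apply mul_nonneg <;> apply Real.rpow_nonneg
    · positivity
    · positivity
  by_cases hPsiE : PsiF H S = ∅
  · rw [Gsum, hPsiE, Finset.sum_empty] at hleG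
    exact le_trans hleG hRHS0
  · obtain ⟨ψ₀, hψ₀⟩ := Finset.nonempty_iff_ne_empty.2 hPsiE
    have hψ₀P : Psi H S ψ₀ := (Finset.mem_filter.1 hψ₀).2
    have hm1 : 1 ≤ m1 H := one_le_m1 hHne
    have hm1pos : 0 < m1 H := lt_of_lt_of_le zero_lt_one hm1
    have hΔ0 : (0 : ℝ) < (Δ : ℝ) := by exact_mod_cast hΔ
    set t := (TS S).card with htdef
    set c := cc S with hcdef
    set x : ℝ := (t : ℝ) - c with hxdef
    have hx0 : 0 ≤ x := by
      have := cc_le_t (S := S) hnd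
      rw [hxdef, htdef, hcdef, sub_nonneg]
      exact_mod_cast this
    have h2c : (t : ℝ) ≤ 2 * x := by
      have := two_cc_le_t (S := S) hnd
      rw [hxdef, htdef, hcdef]
      have h2 : (2 * cc S : ℝ) ≤ ((TS S).card : ℝ) := by exact_mod_cast this
      push_cast at h2 ⊢
      linarith
    have hclaimB := claimB (W := W) H Δ hΔ hdeg C (n : ℝ) hC0 hnpos (le_of_eq (by exact_mod_cast hV))
      S.card S le_rfl hnd
    have hdn : (0 : ℝ) < (Δ : ℝ) / (n : ℝ) := div_pos hΔ0 hnpos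
    set β : ℝ := C ^ 2 * (Δ : ℝ) / (n : ℝ) with hβdef
    have hβ0 : 0 < β := by positivity
    have hβ1 : β ≤ 1 := by
      rw [hβdef, div_le_one hnpos]
      exact hCΔn
    have hCt : C ^ t ≤ C ^ ((2 : ℝ) * x) := by
      rw [← Real.rpow_natCast C t]
      exact Real.rpow_le_rpow_of_exponent_le (le_of_lt hC) h2c
    have hGβ : Gsum H S r ≤ β ^ x := by
      calc Gsum H S r ≤ C ^ t * ((Δ : ℝ) / n) ^ x := hclaimB
        _ ≤ C ^ ((2 : ℝ) * x) * ((Δ : ℝ) / n) ^ x := by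
            apply mul_le_mul_of_nonneg_right hCt (Real.rpow_nonneg (le_of_lt hdn) _)
        _ = (C ^ 2) ^ x * ((Δ : ℝ) / n) ^ x := by
            rw [show (2 : ℝ) * x = ((2 : ℕ) : ℝ) * x by norm_num,
              Real.rpow_mul (le_of_lt hC0), Real.rpow_natCast]
        _ = β ^ x := by
            rw [← Real.mul_rpow (by positivity) (le_of_lt hdn)]
            congr 1
            rw [hβdef]
            ring
    have hsm1 : (S.card : ℝ) / m1 H ≤ x := by
      have hb := m1_bound hnd hψ₀P
      rw [div_le_iff₀ hm1pos]
      calc (S.card : ℝ) ≤ m1 H * (((TS S).card : ℝ) - cc S) := hb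
        _ = x * m1 H := by rw [hxdef, htdef, hcdef]; ring
    have hβx : β ^ x ≤ β ^ ((S.card : ℝ) / m1 H) :=
      Real.rpow_le_rpow_of_exponent_ge hβ0 hβ1 hsm1
    have hfinal : β ^ ((S.card : ℝ) / m1 H)
        = ((C ^ 2 * (Δ : ℝ)) ^ (1 / m1 H) * (n : ℝ) ^ (-(1 / m1 H))) ^ S.card := by
      have hq : (C ^ 2 * (Δ : ℝ)) ^ (1 / m1 H) * (n : ℝ) ^ (-(1 / m1 H)) = β ^ (1 / m1 H) := by
        rw [hβdef, Real.div_rpow (by positivity) (le_of_lt hnpos)]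
        rw [Real.rpow_neg (le_of_lt hnpos), div_eq_mul_inv]
        ring
      rw [hq, ← Real.rpow_natCast (β ^ (1 / m1 H)) S.card, ← Real.rpow_mul (le_of_lt hβ0)]
      congr 1
      field_simp
    calc ∑ φ ∈ (Finset.univ.filter (fun φ : V → W => (S : Set (Sym2 W)) ⊆ Sym2.map φ '' H.edgeSet)), μ φ
        ≤ Gsum H S r := hleG
      _ ≤ β ^ x := hGβ
      _ ≤ β ^ ((S.card : ℝ) / m1 H) := hβx
      _ = _ := hfinal
end

section
/- Let (A,B) be an (ε,d)-regular pair in a graph and let (Â,B̂) be a pair of vertex sets with |Â △ A| ≤ α|Â| and |B̂ △ B| ≤ β|B̂| for some 0 ≤ α, β ≤ 1. Then (Â,B̂) is (ε̂, d̂)-regular with ε̂ = ε + 3(√α + √β) and d̂ = d − 2(α + β). -/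
/-- `(A,B)` is an `(ε,d)`-regular pair in `G`: every pair of subsets of relative
size at least `ε` has density within `ε` of `d(A,B)`, and `d(A,B) ≥ d - ε`. -/
def IsRegPair {V : Type*} [Fintype V] [DecidableEq V]
    (G : SimpleGraph V) [DecidableRel G.Adj] (ε d : ℝ) (A B : Finset V) : Prop :=
  (∀ A' ⊆ A, ∀ B' ⊆ B, ε * A.card ≤ A'.card → ε * B.card ≤ B'.card →
    |((G.edgeDensity A' B' : ℝ)) - ((G.edgeDensity A B : ℝ))| ≤ ε) ∧
  d - ε ≤ ((G.edgeDensity A B : ℝ))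

open Finset

/-- Perturbation lemma: shrinking each side by a relative proportion `t` (resp. `s`)
changes the edge density by at most `t + s`. -/
lemma densD {V : Type*} [Fintype V] [DecidableEq V]
    (G : SimpleGraph V) [DecidableRel G.Adj]
    {C A' D B' : Finset V} (hC : C ⊆ A') (hD : D ⊆ B') {t s : ℝ}
    (ht : 0 ≤ t) (hs : 0 ≤ s)
    (hcx : ((A' \ C).card : ℝ) ≤ t * A'.card)
    (hcy : ((B' \ D).card : ℝ) ≤ s * B'.card) :
    |(G.edgeDensity A' B' : ℝ) - (G.edgeDensity C D : ℝ)| ≤ t + s := by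
  obtain rfl | hA' := A'.eq_empty_or_nonempty
  · rw [Finset.subset_empty.1 hC]
    simp only [SimpleGraph.edgeDensity_empty_left, Rat.cast_zero, sub_zero, abs_zero]
    linarith
  obtain rfl | hB' := B'.eq_empty_or_nonempty
  · rw [Finset.subset_empty.1 hD]
    simp only [SimpleGraph.edgeDensity_empty_right, Rat.cast_zero, sub_zero, abs_zero]
    linarith
  have ha : (0:ℝ) < A'.card := by exact_mod_cast hA'.card_pos
  have hb : (0:ℝ) < B'.card := by exact_mod_cast hB'.card_pos
  obtain rfl | hCne := C.eq_empty_or_nonempty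
  · have h1 : (1:ℝ) ≤ t := by
      rw [Finset.sdiff_empty] at hcx
      nlinarith
    rw [SimpleGraph.edgeDensity_empty_left, Rat.cast_zero, sub_zero,
      abs_of_nonneg (by exact_mod_cast G.edgeDensity_nonneg A' B')]
    have := G.edgeDensity_le_one A' B'
    have : ((G.edgeDensity A' B' : ℝ)) ≤ 1 := by exact_mod_cast this
    linarith
  obtain rfl | hDne := D.eq_empty_or_nonempty
  · have h1 : (1:ℝ) ≤ s := by
      rw [Finset.sdiff_empty] at hcy
      nlinarith
    rw [SimpleGraph.edgeDensity_empty_right, Rat.cast_zero, sub_zero,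
      abs_of_nonneg (by exact_mod_cast G.edgeDensity_nonneg A' B')]
    have := G.edgeDensity_le_one A' B'
    have : ((G.edgeDensity A' B' : ℝ)) ≤ 1 := by exact_mod_cast this
    linarith
  have key := Rel.abs_edgeDensity_sub_edgeDensity_le_one_sub_mul G.Adj hC hD hCne hDne
  have keyq : |G.edgeDensity C D - G.edgeDensity A' B'| ≤
      1 - (C.card : ℚ) / A'.card * ((D.card : ℚ) / B'.card) := key
  have key'' := (Rat.cast_le (K := ℝ)).2 keyq
  push_cast at key''
  have key' : |(G.edgeDensity C D : ℝ) - (G.edgeDensity A' B' : ℝ)| ≤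
      1 - (C.card : ℝ) / A'.card * ((D.card : ℝ) / B'.card) := key''
  rw [abs_sub_comm] at key'
  refine key'.trans ?_
  have hcC : ((A' \ C).card : ℝ) + C.card = A'.card := by
    exact_mod_cast Finset.card_sdiff_add_card_eq_card hC
  have hcD : ((B' \ D).card : ℝ) + D.card = B'.card := by
    exact_mod_cast Finset.card_sdiff_add_card_eq_card hD
  set u := (C.card : ℝ) / A'.card with hu_def
  set v := (D.card : ℝ) / B'.card with hv_def
  have hu1 : u ≤ 1 := by
    rw [hu_def, div_le_one ha]
    exact_mod_cast Finset.card_le_card hC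
  have hv1 : v ≤ 1 := by
    rw [hv_def, div_le_one hb]
    exact_mod_cast Finset.card_le_card hD
  have hut : 1 - t ≤ u := by
    rw [hu_def, le_div_iff₀ ha]
    nlinarith
  have hvs : 1 - s ≤ v := by
    rw [hv_def, le_div_iff₀ hb]
    nlinarith
  nlinarith [mul_nonneg (sub_nonneg.2 hu1) (sub_nonneg.2 hv1)]

set_option maxHeartbeats 1000000 in
/-- Robustness of regularity under small vertex alterations: if `(A,B)` is
`(ε,d)`-regular and `Â, B̂` differ from `A, B` by small symmetric differences,
then `(Â,B̂)` is `(ε + 3(√α + √β), d - 2(α+β))`-regular. -/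
theorem stmt13 {V : Type*} [Fintype V] [DecidableEq V]
    (G : SimpleGraph V) [DecidableRel G.Adj]
    (ε d α β : ℝ) (hα0 : 0 ≤ α) (hα1 : α ≤ 1) (hβ0 : 0 ≤ β) (hβ1 : β ≤ 1)
    (A B Ahat Bhat : Finset V)
    (hreg : IsRegPair G ε d A B)
    (hA : ((symmDiff Ahat A).card : ℝ) ≤ α * Ahat.card)
    (hB : ((symmDiff Bhat B).card : ℝ) ≤ β * Bhat.card) :
    IsRegPair G (ε + 3 * (Real.sqrt α + Real.sqrt β)) (d - 2 * (α + β)) Ahat Bhat := by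
  obtain ⟨hsub, hden⟩ := hreg
  set sa := Real.sqrt α with hsa_def
  set sb := Real.sqrt β with hsb_def
  have hsa0 : 0 ≤ sa := Real.sqrt_nonneg α
  have hsb0 : 0 ≤ sb := Real.sqrt_nonneg β
  have hsa2 : sa * sa = α := Real.mul_self_sqrt hα0
  have hsb2 : sb * sb = β := Real.mul_self_sqrt hβ0
  have hsa1 : sa ≤ 1 := Real.sqrt_le_one.2 hα1
  have hsb1 : sb ≤ 1 := Real.sqrt_le_one.2 hβ1
  have hαsa : α ≤ sa := by
    calc α = sa * sa := hsa2.symm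
      _ ≤ 1 * sa := mul_le_mul_of_nonneg_right hsa1 hsa0
      _ = sa := one_mul sa
  have hβsb : β ≤ sb := by
    calc β = sb * sb := hsb2.symm
      _ ≤ 1 * sb := mul_le_mul_of_nonneg_right hsb1 hsb0
      _ = sb := one_mul sb
  -- ε is nonnegative
  have hε0 : 0 ≤ ε := by
    by_contra hc
    push_neg at hc
    have h0A : ε * A.card ≤ ((∅ : Finset V).card : ℝ) := by
      simp only [Finset.card_empty, Nat.cast_zero]
      exact mul_nonpos_iff.2 (Or.inr ⟨hc.le, Nat.cast_nonneg _⟩)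
    have h0B : ε * B.card ≤ ((∅ : Finset V).card : ℝ) := by
      simp only [Finset.card_empty, Nat.cast_zero]
      exact mul_nonpos_iff.2 (Or.inr ⟨hc.le, Nat.cast_nonneg _⟩)
    have h := hsub ∅ (Finset.empty_subset A) ∅ (Finset.empty_subset B) h0A h0B
    have h2 := abs_nonneg ((G.edgeDensity (∅ : Finset V) (∅ : Finset V) : ℝ) - (G.edgeDensity A B : ℝ))
    linarith only [h, h2, hc]
  -- basic card inequalities
  have hsd1 : Ahat \ A ⊆ symmDiff Ahat A := by
    intro x hx; rw [Finset.mem_symmDiff]; rw [Finset.mem_sdiff] at hx; exact Or.inl hx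
  have hsd2 : A \ Ahat ⊆ symmDiff Ahat A := by
    intro x hx; rw [Finset.mem_symmDiff]; rw [Finset.mem_sdiff] at hx; exact Or.inr hx
  have hsd3 : Bhat \ B ⊆ symmDiff Bhat B := by
    intro x hx; rw [Finset.mem_symmDiff]; rw [Finset.mem_sdiff] at hx; exact Or.inl hx
  have hsd4 : B \ Bhat ⊆ symmDiff Bhat B := by
    intro x hx; rw [Finset.mem_symmDiff]; rw [Finset.mem_sdiff] at hx; exact Or.inr hx
  have hA1 : ((Ahat \ A).card : ℝ) ≤ α * Ahat.card :=
    le_trans (by exact_mod_cast Finset.card_le_card hsd1) hA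
  have hA2 : ((A \ Ahat).card : ℝ) ≤ α * Ahat.card :=
    le_trans (by exact_mod_cast Finset.card_le_card hsd2) hA
  have hB1 : ((Bhat \ B).card : ℝ) ≤ β * Bhat.card :=
    le_trans (by exact_mod_cast Finset.card_le_card hsd3) hB
  have hB2 : ((B \ Bhat).card : ℝ) ≤ β * Bhat.card :=
    le_trans (by exact_mod_cast Finset.card_le_card hsd4) hB
  have hAcard : ((A \ Ahat).card : ℝ) + ((A ∩ Ahat).card : ℝ) = A.card := by
    exact_mod_cast Finset.card_sdiff_add_card_inter A Ahat
  have hAhcard : ((Ahat \ A).card : ℝ) + ((Ahat ∩ A).card : ℝ) = Ahat.card := by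
    exact_mod_cast Finset.card_sdiff_add_card_inter Ahat A
  have hBcard : ((B \ Bhat).card : ℝ) + ((B ∩ Bhat).card : ℝ) = B.card := by
    exact_mod_cast Finset.card_sdiff_add_card_inter B Bhat
  have hBhcard : ((Bhat \ B).card : ℝ) + ((Bhat ∩ B).card : ℝ) = Bhat.card := by
    exact_mod_cast Finset.card_sdiff_add_card_inter Bhat B
  have hiA : ((A ∩ Ahat).card : ℝ) ≤ Ahat.card := by
    exact_mod_cast Finset.card_le_card (Finset.inter_subset_right)
  have hiA' : ((Ahat ∩ A).card : ℝ) ≤ A.card := by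
    exact_mod_cast Finset.card_le_card (Finset.inter_subset_right)
  have hiB : ((B ∩ Bhat).card : ℝ) ≤ Bhat.card := by
    exact_mod_cast Finset.card_le_card (Finset.inter_subset_right)
  have hiB' : ((Bhat ∩ B).card : ℝ) ≤ B.card := by
    exact_mod_cast Finset.card_le_card (Finset.inter_subset_right)
  have hAu : (A.card : ℝ) ≤ (1 + α) * Ahat.card := by linarith only [hAcard, hA2, hiA]
  have hAl : (1 - α) * Ahat.card ≤ (A.card : ℝ) := by linarith only [hAhcard, hA1, hiA']
  have hBu : (B.card : ℝ) ≤ (1 + β) * Bhat.card := by linarith only [hBcard, hB2, hiB]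
  have hBl : (1 - β) * Bhat.card ≤ (B.card : ℝ) := by linarith only [hBhcard, hB1, hiB']
  have hd01 : (0:ℝ) ≤ (G.edgeDensity A B : ℝ) := by exact_mod_cast G.edgeDensity_nonneg A B
  have hd11 : (G.edgeDensity A B : ℝ) ≤ 1 := by exact_mod_cast G.edgeDensity_le_one A B
  have hdh0 : (0:ℝ) ≤ (G.edgeDensity Ahat Bhat : ℝ) := by
    exact_mod_cast G.edgeDensity_nonneg Ahat Bhat
  have hAhatsd : Ahat \ (Ahat ∩ A) = Ahat \ A := by
    ext x; simp only [Finset.mem_sdiff, Finset.mem_inter]; tauto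
  have hAsd : A \ (Ahat ∩ A) = A \ Ahat := by
    ext x; simp only [Finset.mem_sdiff, Finset.mem_inter]; tauto
  have hBhatsd : Bhat \ (Bhat ∩ B) = Bhat \ B := by
    ext x; simp only [Finset.mem_sdiff, Finset.mem_inter]; tauto
  have hBsd : B \ (Bhat ∩ B) = B \ Bhat := by
    ext x; simp only [Finset.mem_sdiff, Finset.mem_inter]; tauto
  constructor
  · -- regularity condition
    intro A' hA' B' hB' hcA hcB
    obtain rfl | hAhat := Ahat.eq_empty_or_nonempty
    · rw [Finset.subset_empty.1 hA']
      simp only [SimpleGraph.edgeDensity_empty_left, Rat.cast_zero, sub_self, abs_zero]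
      linarith only [hε0, hsa0, hsb0]
    obtain rfl | hBhat := Bhat.eq_empty_or_nonempty
    · rw [Finset.subset_empty.1 hB']
      simp only [SimpleGraph.edgeDensity_empty_right, Rat.cast_zero, sub_self, abs_zero]
      linarith only [hε0, hsa0, hsb0]
    have hah : (0:ℝ) < Ahat.card := by exact_mod_cast hAhat.card_pos
    have hbh : (0:ℝ) < Bhat.card := by exact_mod_cast hBhat.card_pos
    have hcA' : ((A'.card : ℝ)) ≤ Ahat.card := by exact_mod_cast Finset.card_le_card hA'
    have hεh1 : ε + 3 * (sa + sb) ≤ 1 := by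
      have h := hcA.trans hcA'
      have h2 := le_of_mul_le_mul_right
        (by linarith only [h] : (ε + 3 * (sa + sb)) * Ahat.card ≤ 1 * Ahat.card) hah
      linarith only [h2]
    have hsa3 : sa ≤ 1/3 := by linarith only [hεh1, hε0, hsb0]
    have hsb3 : sb ≤ 1/3 := by linarith only [hεh1, hε0, hsa0]
    have hε1 : ε ≤ 1 := by linarith only [hεh1, hsa0, hsb0]
    have hα9 : α ≤ 1/9 := by
      calc α = sa * sa := hsa2.symm
        _ ≤ (1/3) * (1/3) := mul_le_mul hsa3 hsa3 hsa0 (by norm_num)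
        _ = 1/9 := by norm_num
    have hβ9 : β ≤ 1/9 := by
      calc β = sb * sb := hsb2.symm
        _ ≤ (1/3) * (1/3) := mul_le_mul hsb3 hsb3 hsb0 (by norm_num)
        _ = 1/9 := by norm_num
    have hα3 : α ≤ sa/3 := by
      calc α = sa * sa := hsa2.symm
        _ ≤ sa * (1/3) := mul_le_mul_of_nonneg_left hsa3 hsa0
        _ = sa/3 := by ring
    have hβ3 : β ≤ sb/3 := by
      calc β = sb * sb := hsb2.symm
        _ ≤ sb * (1/3) := mul_le_mul_of_nonneg_left hsb3 hsb0
        _ = sb/3 := by ring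
    have h8A : (Ahat.card : ℝ) ≤ 9/8 * A.card := by
      linarith only [hAl, mul_le_mul_of_nonneg_right hα9 hah.le]
    have h8B : (Bhat.card : ℝ) ≤ 9/8 * B.card := by
      linarith only [hBl, mul_le_mul_of_nonneg_right hβ9 hbh.le]
    -- cards of A' \ A etc.
    have hA'A : ((A' \ A).card : ℝ) ≤ α * Ahat.card := by
      refine le_trans ?_ hA1
      exact_mod_cast Finset.card_le_card (Finset.sdiff_subset_sdiff hA' Finset.Subset.rfl)
    have hB'B : ((B' \ B).card : ℝ) ≤ β * Bhat.card := by
      refine le_trans ?_ hB1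
      exact_mod_cast Finset.card_le_card (Finset.sdiff_subset_sdiff hB' Finset.Subset.rfl)
    have hA'card : ((A' \ A).card : ℝ) + ((A' ∩ A).card : ℝ) = A'.card := by
      exact_mod_cast Finset.card_sdiff_add_card_inter A' A
    have hB'card : ((B' \ B).card : ℝ) + ((B' ∩ B).card : ℝ) = B'.card := by
      exact_mod_cast Finset.card_sdiff_add_card_inter B' B
    have hA'sd : A' \ (A' ∩ A) = A' \ A := by
      ext x; simp only [Finset.mem_sdiff, Finset.mem_inter]; tauto
    have hB'sd : B' \ (B' ∩ B) = B' \ B := by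
      ext x; simp only [Finset.mem_sdiff, Finset.mem_inter]; tauto
    -- (i)
    have key_i : |(G.edgeDensity A' B' : ℝ) - (G.edgeDensity (A' ∩ A) (B' ∩ B) : ℝ)| ≤
        sa/3 + sb/3 := by
      refine densD G Finset.inter_subset_left Finset.inter_subset_left
        (by linarith only [hsa0]) (by linarith only [hsb0]) ?_ ?_
      · rw [hA'sd]
        have e1 : α ≤ sa/3 * (ε + 3 * (sa + sb)) := by
          nlinarith only [mul_nonneg hsa0 hε0, mul_nonneg hsa0 hsb0, hsa2]
        calc ((A' \ A).card : ℝ) ≤ α * Ahat.card := hA'A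
          _ ≤ (sa/3 * (ε + 3 * (sa + sb))) * Ahat.card :=
              mul_le_mul_of_nonneg_right e1 hah.le
          _ = sa/3 * ((ε + 3 * (sa + sb)) * Ahat.card) := by ring
          _ ≤ sa/3 * A'.card := mul_le_mul_of_nonneg_left hcA (by linarith only [hsa0])
      · rw [hB'sd]
        have e1 : β ≤ sb/3 * (ε + 3 * (sa + sb)) := by
          nlinarith only [mul_nonneg hsb0 hε0, mul_nonneg hsb0 hsa0, hsb2]
        calc ((B' \ B).card : ℝ) ≤ β * Bhat.card := hB'B
          _ ≤ (sb/3 * (ε + 3 * (sa + sb))) * Bhat.card :=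
              mul_le_mul_of_nonneg_right e1 hbh.le
          _ = sb/3 * ((ε + 3 * (sa + sb)) * Bhat.card) := by ring
          _ ≤ sb/3 * B'.card := mul_le_mul_of_nonneg_left hcB (by linarith only [hsb0])
    -- (ii)
    have key_ii : |(G.edgeDensity (A' ∩ A) (B' ∩ B) : ℝ) - (G.edgeDensity A B : ℝ)| ≤ ε := by
      refine hsub (A' ∩ A) Finset.inter_subset_right (B' ∩ B) Finset.inter_subset_right ?_ ?_
      · have hεα : ε * α ≤ α := mul_le_of_le_one_left hα0 hε1
        have s1 : ε * A.card ≤ ε * ((1 + α) * Ahat.card) := mul_le_mul_of_nonneg_left hAu hε0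
        have s2 : ε * ((1 + α) * Ahat.card) ≤ (ε + 3 * (sa + sb) - α) * Ahat.card := by
          have inner : ε * (1 + α) ≤ ε + 3 * (sa + sb) - α := by
            linarith only [hεα, hαsa, hsa0, hsb0]
          rw [← mul_assoc]
          exact mul_le_mul_of_nonneg_right inner hah.le
        have s3 : (ε + 3 * (sa + sb) - α) * Ahat.card ≤ ((A' ∩ A).card : ℝ) := by
          linarith only [hA'card, hA'A, hcA]
        linarith only [s1, s2, s3]
      · have hεβ : ε * β ≤ β := mul_le_of_le_one_left hβ0 hε1
        have s1 : ε * B.card ≤ ε * ((1 + β) * Bhat.card) := mul_le_mul_of_nonneg_left hBu hε0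
        have s2 : ε * ((1 + β) * Bhat.card) ≤ (ε + 3 * (sa + sb) - β) * Bhat.card := by
          have inner : ε * (1 + β) ≤ ε + 3 * (sa + sb) - β := by
            linarith only [hεβ, hβsb, hsb0, hsa0]
          rw [← mul_assoc]
          exact mul_le_mul_of_nonneg_right inner hbh.le
        have s3 : (ε + 3 * (sa + sb) - β) * Bhat.card ≤ ((B' ∩ B).card : ℝ) := by
          linarith only [hB'card, hB'B, hcB]
        linarith only [s1, s2, s3]
    -- (iii)
    have key_iii : |(G.edgeDensity A B : ℝ) - (G.edgeDensity (Ahat ∩ A) (Bhat ∩ B) : ℝ)| ≤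
        (9/8) * α + (9/8) * β := by
      refine densD G Finset.inter_subset_right Finset.inter_subset_right
        (by linarith only [hα0]) (by linarith only [hβ0]) ?_ ?_
      · rw [hAsd]
        calc ((A \ Ahat).card : ℝ) ≤ α * Ahat.card := hA2
          _ ≤ α * (9/8 * A.card) := mul_le_mul_of_nonneg_left h8A hα0
          _ = (9/8) * α * A.card := by ring
      · rw [hBsd]
        calc ((B \ Bhat).card : ℝ) ≤ β * Bhat.card := hB2
          _ ≤ β * (9/8 * B.card) := mul_le_mul_of_nonneg_left h8B hβ0
          _ = (9/8) * β * B.card := by ring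
    -- (iv)
    have key_iv : |(G.edgeDensity Ahat Bhat : ℝ) - (G.edgeDensity (Ahat ∩ A) (Bhat ∩ B) : ℝ)| ≤
        α + β := by
      refine densD G Finset.inter_subset_left Finset.inter_subset_left hα0 hβ0 ?_ ?_
      · rw [hAhatsd]; exact hA1
      · rw [hBhatsd]; exact hB1
    have i1 := abs_le.1 key_i
    have i2 := abs_le.1 key_ii
    have i3 := abs_le.1 key_iii
    have i4 := abs_le.1 key_iv
    rw [abs_le]
    constructor
    · linarith only [i1.1, i2.1, i3.1, i4.2, hα3, hβ3, hsa0, hsb0]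
    · linarith only [i1.2, i2.2, i3.2, i4.1, hα3, hβ3, hsa0, hsb0]
  · -- density condition
    by_cases hbig : 1 ≤ 2 * (α + β) + 3 * (sa + sb)
    · linarith only [hden, hd11, hdh0, hbig]
    · push_neg at hbig
      have hα2 : α < 1/2 := by linarith only [hbig, hβ0, hsa0, hsb0]
      have hβ2 : β < 1/2 := by linarith only [hbig, hα0, hsa0, hsb0]
      obtain rfl | hAhat := Ahat.eq_empty_or_nonempty
      · -- then A = ∅
        have : (A.card : ℝ) ≤ 0 := by
          have := hA
          simp only [Finset.card_empty, Nat.cast_zero, mul_zero] at this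
          calc (A.card : ℝ) ≤ (symmDiff (∅ : Finset V) A).card := by
                exact_mod_cast Finset.card_le_card (by
                  intro x hx; rw [Finset.mem_symmDiff]; simp at hx ⊢; exact hx)
              _ ≤ 0 := this
        have hAe : A = ∅ := by
          rw [← Finset.card_eq_zero]
          exact_mod_cast le_antisymm (by exact_mod_cast this) (Nat.zero_le _)
        rw [hAe, SimpleGraph.edgeDensity_empty_left] at hden
        simp only [SimpleGraph.edgeDensity_empty_left, Rat.cast_zero] at hden ⊢
        have hdh0' : (0:ℝ) ≤ (G.edgeDensity (∅ : Finset V) Bhat : ℝ) := by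
          exact_mod_cast G.edgeDensity_nonneg _ _
        simp only [SimpleGraph.edgeDensity_empty_left, Rat.cast_zero] at hdh0'
        linarith only [hden, hα0, hβ0, hsa0, hsb0]
      obtain rfl | hBhat := Bhat.eq_empty_or_nonempty
      · have : (B.card : ℝ) ≤ 0 := by
          have := hB
          simp only [Finset.card_empty, Nat.cast_zero, mul_zero] at this
          calc (B.card : ℝ) ≤ (symmDiff (∅ : Finset V) B).card := by
                exact_mod_cast Finset.card_le_card (by
                  intro x hx; rw [Finset.mem_symmDiff]; simp at hx ⊢; exact hx)
              _ ≤ 0 := this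
        have hBe : B = ∅ := by
          rw [← Finset.card_eq_zero]
          exact_mod_cast le_antisymm (by exact_mod_cast this) (Nat.zero_le _)
        rw [hBe, SimpleGraph.edgeDensity_empty_right] at hden
        simp only [SimpleGraph.edgeDensity_empty_right, Rat.cast_zero] at hden ⊢
        linarith only [hden, hα0, hβ0, hsa0, hsb0]
      have hah : (0:ℝ) < Ahat.card := by exact_mod_cast hAhat.card_pos
      have hbh : (0:ℝ) < Bhat.card := by exact_mod_cast hBhat.card_pos
      have key1 : |(G.edgeDensity Ahat Bhat : ℝ) - (G.edgeDensity (Ahat ∩ A) (Bhat ∩ B) : ℝ)| ≤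
          α + β := by
        refine densD G Finset.inter_subset_left Finset.inter_subset_left hα0 hβ0 ?_ ?_
        · rw [hAhatsd]; exact hA1
        · rw [hBhatsd]; exact hB1
      have key2 : |(G.edgeDensity A B : ℝ) - (G.edgeDensity (Ahat ∩ A) (Bhat ∩ B) : ℝ)| ≤
          2*α + 2*β := by
        refine densD G Finset.inter_subset_right Finset.inter_subset_right
          (by linarith only [hα0]) (by linarith only [hβ0]) ?_ ?_
        · rw [hAsd]
          have h2A : (Ahat.card : ℝ) ≤ 2 * A.card := by
            linarith only [hAl, mul_le_mul_of_nonneg_right hα2.le hah.le]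
          calc ((A \ Ahat).card : ℝ) ≤ α * Ahat.card := hA2
            _ ≤ α * (2 * A.card) := mul_le_mul_of_nonneg_left h2A hα0
            _ = 2 * α * A.card := by ring
        · rw [hBsd]
          have h2B : (Bhat.card : ℝ) ≤ 2 * B.card := by
            linarith only [hBl, mul_le_mul_of_nonneg_right hβ2.le hbh.le]
          calc ((B \ Bhat).card : ℝ) ≤ β * Bhat.card := hB2
            _ ≤ β * (2 * B.card) := mul_le_mul_of_nonneg_left h2B hβ0
            _ = 2 * β * B.card := by ring
      have k1 := abs_le.1 key1
      have k2 := abs_le.1 key2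
      linarith only [k1.1, k2.2, hden, hαsa, hβsb, hsa0, hsb0]
end
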